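/- arXiv:2601.06812 — 11 statements merged into one kernel-verified Lean document; each statement's English description precedes it below -/
import Mathlib

section
/- Let s : ℕ → ℕ → ℕ satisfy s 0 0 = 1, s n 0 = 0 for all n ≥ 1, s n j = 0 whenever j > n, and s (n+1) j = n·s n j + s n (j−1) for all n ≥ 0 and j ≥ 1 (the unsigned Stirling numbers of the first kind). Let f : (0,∞) → ℝ be infinitely differentiable and define g : ℝ → ℝ by g(x) = f(exp x). Then for every n ≥ 1 and every t > 0, the n-th derivative of f satisfies f⁽ⁿ⁾(t) = t^{−n} · Σ_{j=1}^{n} (−1)^{n+j} · s n j · g⁽ʲ⁾(log t). -/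
lemma sum_step_aux (s : ℕ → ℕ → ℕ)
    (hs0 : ∀ n : ℕ, 1 ≤ n → s n 0 = 0)
    (hstop : ∀ n j : ℕ, n < j → s n j = 0)
    (hsrec : ∀ n : ℕ, ∀ j : ℕ, 1 ≤ j → s (n + 1) j = n * s n j + s n (j - 1))
    (G : ℕ → ℝ) (n : ℕ) (hn : 1 ≤ n) :
    ∑ j ∈ Finset.Icc 1 (n+1), (-1:ℝ)^(n+1+j) * (s (n+1) j : ℝ) * G j
      = (∑ j ∈ Finset.Icc 1 n, (-1:ℝ)^(n+j) * (s n j : ℝ) * G (j+1))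
        - n * ∑ j ∈ Finset.Icc 1 n, (-1:ℝ)^(n+j) * (s n j : ℝ) * G j := by
  have step1 : ∑ j ∈ Finset.Icc 1 (n+1), (-1:ℝ)^(n+1+j) * (s (n+1) j : ℝ) * G j
      = ∑ j ∈ Finset.Icc 1 (n+1),
          ((-1:ℝ)^(n+1+j) * (s n (j-1) : ℝ) * G j
            - (n : ℝ) * ((-1:ℝ)^(n+j) * (s n j : ℝ) * G j)) := by
    refine Finset.sum_congr rfl fun j hj => ?_
    have hj1 : 1 ≤ j := (Finset.mem_Icc.mp hj).1
    rw [hsrec n j hj1]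
    have hpow : (-1:ℝ)^(n+1+j) = -(-1:ℝ)^(n+j) := by
      rw [show n+1+j = (n+j)+1 by ring, pow_succ]; ring
    push_cast
    rw [hpow]; ring
  rw [step1, Finset.sum_sub_distrib, ← Finset.mul_sum]
  congr 1
  · -- shifted sum
    rw [← Finset.Ico_add_one_right_eq_Icc, Finset.sum_Ico_eq_sum_range,
      ← Finset.Ico_add_one_right_eq_Icc, Finset.sum_Ico_eq_sum_range]
    simp only [Nat.succ_sub_one, Nat.add_sub_cancel]
    rw [Finset.sum_range_succ']
    have h0 : (-1:ℝ)^(n+1+(1+0)) * (s n (1+0-1) : ℝ) * G (1+0) = 0 := by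
      simp [hs0 n hn]
    rw [h0, add_zero]
    refine Finset.sum_congr rfl fun i _ => ?_
    rw [show (1:ℕ)+(i+1) = 1+i+1 by omega]
    rw [show (1:ℕ)+i+1-1 = 1+i by omega,
      show n+1+(1+i+1) = (n+(1+i))+2 by omega, pow_add]
    norm_num
  · rw [Finset.sum_Icc_succ_top (by omega : 1 ≤ n + 1)]
    rw [hstop n (n+1) (by omega)]
    simp

/-- If `s` is the unsigned Stirling-numbers-of-the-first-kind array,
`f` is smooth on `(0,∞)` and `g x = f (exp x)`, then
`f⁽ⁿ⁾(t) = t^{−n} · ∑_{j=1}^{n} (−1)^{n+j} · s n j · g⁽ʲ⁾(log t)` for all `n ≥ 1`, `t > 0`. -/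
theorem stmt_1
    (s : ℕ → ℕ → ℕ)
    (hs00 : s 0 0 = 1)
    (hs0 : ∀ n : ℕ, 1 ≤ n → s n 0 = 0)
    (hstop : ∀ n j : ℕ, n < j → s n j = 0)
    (hsrec : ∀ n : ℕ, ∀ j : ℕ, 1 ≤ j → s (n + 1) j = n * s n j + s n (j - 1))
    (f : ℝ → ℝ) (hf : ContDiffOn ℝ (⊤ : ℕ∞) f (Set.Ioi 0))
    (g : ℝ → ℝ) (hg : ∀ x : ℝ, g x = f (Real.exp x)) :
    ∀ n : ℕ, 1 ≤ n → ∀ t : ℝ, 0 < t →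
      iteratedDeriv n f t =
        t ^ (-(n : ℤ)) *
          ∑ j ∈ Finset.Icc 1 n,
            (-1 : ℝ) ^ (n + j) * (s n j : ℝ) * iteratedDeriv j g (Real.log t) := by
  -- g is smooth everywhere
  have hgc : ContDiff ℝ (⊤ : ℕ∞) g := by
    have hgeq : g = f ∘ Real.exp := funext hg
    rw [hgeq, ← contDiffOn_univ]
    exact hf.comp Real.contDiff_exp.contDiffOn (fun x _ => Real.exp_pos x)
  have hdiff : ∀ m : ℕ, Differentiable ℝ (iteratedDeriv m g) := fun m =>
    hgc.differentiable_iteratedDeriv m (by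
      exact_mod_cast WithTop.coe_lt_coe.mpr (WithTop.coe_lt_top m))
  have hder : ∀ (j : ℕ) (t : ℝ), t ≠ 0 →
      HasDerivAt (fun x => iteratedDeriv j g (Real.log x))
        (iteratedDeriv (j+1) g (Real.log t) * t⁻¹) t := by
    intro j t ht
    have h1 := ((hdiff j) (Real.log t)).hasDerivAt
    have h2 := h1.comp t (Real.hasDerivAt_log ht)
    rw [iteratedDeriv_succ]
    exact h2
  refine Nat.le_induction ?_ ?_
  · -- base case n = 1
    intro t ht
    have hfg : f =ᶠ[nhds t] fun x => g (Real.log x) := by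
      filter_upwards [isOpen_Ioi.mem_nhds ht] with x hx
      rw [hg (Real.log x), Real.exp_log hx]
    have hd : HasDerivAt (fun x => g (Real.log x))
        (iteratedDeriv 1 g (Real.log t) * t⁻¹) t := by
      simpa using hder 0 t ht.ne'
    rw [iteratedDeriv_one, hfg.deriv_eq, hd.deriv]
    have hs11 : s 1 1 = 1 := by
      rw [hsrec 0 1 le_rfl, hstop 0 1 one_pos, hs00]
    simp only [Finset.Icc_self, Finset.sum_singleton, hs11, Nat.cast_one,
      pow_succ, pow_one]
    norm_num [zpow_neg_one]
    ring
  · -- induction step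
    intro n hn IH t ht
    rw [iteratedDeriv_succ]
    have heq : iteratedDeriv n f =ᶠ[nhds t] fun x =>
        x ^ (-(n:ℤ)) * ∑ j ∈ Finset.Icc 1 n,
          (-1:ℝ)^(n+j) * (s n j : ℝ) * iteratedDeriv j g (Real.log x) := by
      filter_upwards [isOpen_Ioi.mem_nhds ht] with x hx
      exact IH x hx
    rw [heq.deriv_eq]
    have h1 := hasDerivAt_zpow (-(n:ℤ)) t (Or.inl ht.ne')
    have h2 : HasDerivAt (fun x => ∑ j ∈ Finset.Icc 1 n,
          (-1:ℝ)^(n+j) * (s n j : ℝ) * iteratedDeriv j g (Real.log x))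
        (∑ j ∈ Finset.Icc 1 n,
          (-1:ℝ)^(n+j) * (s n j : ℝ) * (iteratedDeriv (j+1) g (Real.log t) * t⁻¹)) t :=
      HasDerivAt.fun_sum fun j _ => (hder j t ht.ne').const_mul _
    rw [(h1.fun_mul h2).deriv]
    set G : ℕ → ℝ := fun j => iteratedDeriv j g (Real.log t) with hG
    rw [sum_step_aux s hs0 hstop hsrec G n hn]
    have e1 : ∑ j ∈ Finset.Icc 1 n, (-1:ℝ)^(n+j) * (s n j : ℝ) * (G (j+1) * t⁻¹)
        = (∑ j ∈ Finset.Icc 1 n, (-1:ℝ)^(n+j) * (s n j : ℝ) * G (j+1)) * t⁻¹ := by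
      rw [Finset.sum_mul]
      exact Finset.sum_congr rfl fun j _ => by ring
    rw [e1]
    rw [show (-((n:ℕ)+1:ℕ) : ℤ) = -(n:ℤ) - 1 by push_cast; ring]
    rw [zpow_sub_one₀ ht.ne']
    push_cast
    ring
end

section
/- Let S : ℕ → ℕ → ℕ satisfy S 0 0 = 1, S n 0 = 0 for all n ≥ 1, S n j = 0 whenever j > n, and S (n+1) j = j·S n j + S n (j−1) for all n ≥ 0 and j ≥ 1 (the Stirling numbers of the second kind). Let N : ℕ → ℝ be a sequence of positive reals such that the ratios N_{n+1}/N_n are non-decreasing in n and N_{n+1}/(n·N_n) → ∞ as n → ∞. Define Ñ_n = Σ_{j=1}^{n} S n j · N_j. Then for every δ > 0 there exists C_δ > 0 such that Ñ_n ≤ C_δ·(1+δ)ⁿ·N_n for all n ≥ 1. -/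
/-- If `S` is the Stirling-numbers-of-the-second-kind array and `N` is a
positive sequence with non-decreasing ratios `N (n+1) / N n` and `N (n+1) / (n · N n) → ∞`,
then `Ñ_n = ∑_{j=1}^{n} S n j · N j` satisfies `Ñ_n ≤ C_δ · (1+δ)ⁿ · N_n` for every `δ > 0`. -/
theorem stmt_2
    (S : ℕ → ℕ → ℕ)
    (hS00 : S 0 0 = 1)
    (hS0 : ∀ n : ℕ, 1 ≤ n → S n 0 = 0)
    (hStop : ∀ n j : ℕ, n < j → S n j = 0)
    (hSrec : ∀ n : ℕ, ∀ j : ℕ, 1 ≤ j → S (n + 1) j = j * S n j + S n (j - 1))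
    (N : ℕ → ℝ) (hNpos : ∀ n, 0 < N n)
    (hNmono : Monotone fun n : ℕ => N (n + 1) / N n)
    (hNlim : Filter.Tendsto (fun n : ℕ => N (n + 1) / ((n : ℝ) * N n))
      Filter.atTop Filter.atTop) :
    ∀ δ : ℝ, 0 < δ → ∃ C : ℝ, 0 < C ∧ ∀ n : ℕ, 1 ≤ n →
      (∑ j ∈ Finset.Icc 1 n, (S n j : ℝ) * N j) ≤ C * (1 + δ) ^ n * N n := by
  intro δ hδ
  set G : ℕ → ℝ := fun n => ∑ i ∈ Finset.range n, (S n (i + 1) : ℝ) * N (i + 1) with hGdef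
  have hGeq : ∀ n : ℕ, (∑ j ∈ Finset.Icc 1 n, (S n j : ℝ) * N j) = G n := by
    intro n
    have hset : Finset.Icc 1 n = Finset.map ⟨fun i => i + 1, fun a b h => by simpa using h⟩
        (Finset.range n) := by
      ext x
      simp only [Finset.mem_Icc, Finset.mem_map, Finset.mem_range,
        Function.Embedding.coeFn_mk]
      constructor
      · rintro ⟨h1, h2⟩; exact ⟨x - 1, by omega, by show x - 1 + 1 = x; omega⟩
      · rintro ⟨a, ha, rfl⟩; show 1 ≤ a + 1 ∧ a + 1 ≤ n; omega
    rw [hset, Finset.sum_map]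
    rfl
  have hGnonneg : ∀ n, 0 ≤ G n := fun n =>
    Finset.sum_nonneg fun i _ => mul_nonneg (Nat.cast_nonneg _) (hNpos _).le
  have hpow : ∀ n : ℕ, (0:ℝ) < (1 + δ) ^ n := fun n => pow_pos (by linarith) n
  -- key recursion bound
  have hkey : ∀ n : ℕ, 1 ≤ n → G (n + 1) ≤ ((n : ℝ) + N (n + 1) / N n) * G n := by
    intro n hn
    have hsplit : G (n + 1) =
        (∑ i ∈ Finset.range (n + 1), ((i : ℝ) + 1) * (S n (i + 1) : ℝ) * N (i + 1)) +
        (∑ i ∈ Finset.range (n + 1), (S n i : ℝ) * N (i + 1)) := by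
      rw [hGdef, ← Finset.sum_add_distrib]
      refine Finset.sum_congr rfl fun i _ => ?_
      rw [hSrec n (i + 1) (by omega)]
      have : i + 1 - 1 = i := by omega
      rw [this]
      push_cast
      ring
    have hA : (∑ i ∈ Finset.range (n + 1), ((i : ℝ) + 1) * (S n (i + 1) : ℝ) * N (i + 1)) ≤
        (n : ℝ) * G n := by
      rw [hGdef, Finset.mul_sum, Finset.sum_range_succ]
      rw [hStop n (n + 1) (by omega)]
      simp only [Nat.cast_zero, zero_mul, mul_zero, add_zero]
      refine Finset.sum_le_sum fun i hi => ?_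
      have hi' : i + 1 ≤ n := Finset.mem_range.mp hi
      have h1 : ((i : ℝ) + 1) ≤ (n : ℝ) := by exact_mod_cast hi'
      have := mul_nonneg (Nat.cast_nonneg (α := ℝ) (S n (i + 1))) (hNpos (i + 1)).le
      calc ((i : ℝ) + 1) * (S n (i + 1) : ℝ) * N (i + 1)
          = ((i : ℝ) + 1) * ((S n (i + 1) : ℝ) * N (i + 1)) := by ring
        _ ≤ (n : ℝ) * ((S n (i + 1) : ℝ) * N (i + 1)) := by
            exact mul_le_mul_of_nonneg_right h1 this
    have hB : (∑ i ∈ Finset.range (n + 1), (S n i : ℝ) * N (i + 1)) ≤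
        (N (n + 1) / N n) * G n := by
      rw [Finset.sum_range_succ', hS0 n hn]
      simp only [Nat.cast_zero, zero_mul, add_zero]
      rw [hGdef, Finset.mul_sum]
      refine Finset.sum_le_sum fun i hi => ?_
      have hi' : i + 1 ≤ n := by
        have := Finset.mem_range.mp hi; omega
      have hratio : N (i + 2) / N (i + 1) ≤ N (n + 1) / N n := by
        have := hNmono (show i + 1 ≤ n from hi')
        simpa using this
      have hN2 : N (i + 1 + 1) ≤ (N (n + 1) / N n) * N (i + 1) := by
        rw [div_le_div_iff₀ (hNpos _) (hNpos _)] at hratio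
        rw [div_mul_eq_mul_div, le_div_iff₀ (hNpos n)]
        show N (i + 2) * N n ≤ N (n + 1) * N (i + 1)
        linarith [hratio]
      calc (S n (i + 1) : ℝ) * N (i + 1 + 1)
          ≤ (S n (i + 1) : ℝ) * ((N (n + 1) / N n) * N (i + 1)) :=
            mul_le_mul_of_nonneg_left hN2 (Nat.cast_nonneg _)
        _ = (N (n + 1) / N n) * ((S n (i + 1) : ℝ) * N (i + 1)) := by ring
    rw [hsplit]
    have : ((n : ℝ) + N (n + 1) / N n) * G n = (n : ℝ) * G n + (N (n + 1) / N n) * G n := by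
      ring
    rw [this]
    exact add_le_add hA hB
  -- choose n0 from the limit
  have hev : ∀ᶠ n : ℕ in Filter.atTop, N (n + 1) / ((n : ℝ) * N n) ≥ 1 / δ :=
    hNlim.eventually_ge_atTop (1 / δ)
  obtain ⟨n1, hn1⟩ := hev.exists_forall_of_atTop
  set n0 : ℕ := max n1 1 with hn0def
  have hn0ge1 : 1 ≤ n0 := le_max_right _ _
  -- eventually n ≤ δ * (N (n+1) / N n)
  have hsmall : ∀ n : ℕ, n0 ≤ n → (n : ℝ) ≤ δ * (N (n + 1) / N n) := by
    intro n hn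
    have hn1' : n1 ≤ n := le_trans (le_max_left _ _) hn
    have h := hn1 n hn1'
    have hnpos : (0 : ℝ) < n := by
      have : 1 ≤ n := le_trans hn0ge1 hn
      exact_mod_cast this
    rw [ge_iff_le, div_le_div_iff₀ hδ (mul_pos hnpos (hNpos n))] at h
    have heq : δ * (N (n + 1) / N n) = δ * N (n + 1) / N n := (mul_div_assoc _ _ _).symm
    rw [heq, le_div_iff₀ (hNpos n)]
    nlinarith [hNpos n]
  have hkey2 : ∀ n : ℕ, n0 ≤ n → G (n + 1) ≤ (1 + δ) * (N (n + 1) / N n) * G n := by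
    intro n hn
    have h1 := hkey n (le_trans hn0ge1 hn)
    have h2 := hsmall n hn
    have h3 := hGnonneg n
    nlinarith [div_pos (hNpos (n + 1)) (hNpos n)]
  -- the constant
  have hne : (Finset.Icc 1 n0).Nonempty := Finset.nonempty_Icc.mpr hn0ge1
  set C : ℝ := 1 ⊔ (Finset.Icc 1 n0).sup' hne (fun k => G k / ((1 + δ) ^ k * N k)) with hCdef
  have hCpos : (0 : ℝ) < C := lt_of_lt_of_le one_pos le_sup_left
  have hCbound : ∀ k : ℕ, 1 ≤ k → k ≤ n0 → G k ≤ C * (1 + δ) ^ k * N k := by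
    intro k hk1 hk2
    have hmem : k ∈ Finset.Icc 1 n0 := Finset.mem_Icc.mpr ⟨hk1, hk2⟩
    have hle : G k / ((1 + δ) ^ k * N k) ≤ C :=
      le_trans (Finset.le_sup' (fun k => G k / ((1 + δ) ^ k * N k)) hmem) le_sup_right
    have hden : (0 : ℝ) < (1 + δ) ^ k * N k := mul_pos (hpow k) (hNpos k)
    rw [div_le_iff₀ hden] at hle
    calc G k ≤ C * ((1 + δ) ^ k * N k) := hle
      _ = C * (1 + δ) ^ k * N k := by ring
  -- tail induction
  have htail : ∀ m : ℕ, G (n0 + m) ≤ C * (1 + δ) ^ (n0 + m) * N (n0 + m) := by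
    intro m
    induction m with
    | zero => simpa using hCbound n0 hn0ge1 le_rfl
    | succ m ih =>
      have hn : n0 ≤ n0 + m := Nat.le_add_right _ _
      have h1 := hkey2 (n0 + m) hn
      have hfac : (0 : ℝ) ≤ (1 + δ) * (N (n0 + m + 1) / N (n0 + m)) :=
        mul_nonneg (by linarith) (div_pos (hNpos _) (hNpos _)).le
      have h2 : (1 + δ) * (N (n0 + m + 1) / N (n0 + m)) * G (n0 + m) ≤
          (1 + δ) * (N (n0 + m + 1) / N (n0 + m)) *
            (C * (1 + δ) ^ (n0 + m) * N (n0 + m)) :=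
        mul_le_mul_of_nonneg_left ih hfac
      have heq : (1 + δ) * (N (n0 + m + 1) / N (n0 + m)) *
          (C * (1 + δ) ^ (n0 + m) * N (n0 + m)) =
          C * (1 + δ) ^ (n0 + m + 1) * N (n0 + m + 1) := by
        have hne' : N (n0 + m) ≠ 0 := (hNpos _).ne'
        field_simp
        ring
      have : n0 + (m + 1) = n0 + m + 1 := by omega
      rw [this]
      calc G (n0 + m + 1) ≤ (1 + δ) * (N (n0 + m + 1) / N (n0 + m)) * G (n0 + m) := h1
        _ ≤ C * (1 + δ) ^ (n0 + m + 1) * N (n0 + m + 1) := by rw [← heq] at *; exact h2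
  refine ⟨C, hCpos, fun n hn => ?_⟩
  rw [hGeq]
  rcases le_or_gt n n0 with h | h
  · exact hCbound n hn h
  · have : n = n0 + (n - n0) := by omega
    rw [this]
    exact htail (n - n0)
end

section
/- Let N be a regular sequence with lim_{n→∞} (N_n/n!)^{1/n} = ∞. Let f : (0,∞) → ℝ be infinitely differentiable and define g : ℝ → ℝ by g(x) = f(exp x). Then the following are equivalent: (i) for every η > 1 there exists C > 0 such that tⁿ·|f⁽ⁿ⁾(t)| ≤ C·ηⁿ·N_n for all t ∈ (0,1] and all n ∈ ℕ; (ii) for every η > 1 there exists C > 0 such that |g⁽ⁿ⁾(x)| ≤ C·ηⁿ·N_n for all x ≤ 0 and all n ∈ ℕ. -/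
/-- A sequence `M`, written `M n = n! · m n` with `m n = M n / n!`, is *regular* if it is
positive, `(m n)` is eventually log-convex, `(m n)^{1/n}` is eventually non-decreasing, and
`m (n+1) ≤ C · (m n)^{1 + 1/n}` for some `C > 0` and all `n ≥ 1`. -/
def RegularSeq (M : ℕ → ℝ) : Prop :=
  (∀ n, 0 < M n) ∧
  (∃ n₀ : ℕ, ∀ n : ℕ, n₀ ≤ n →
      (M (n + 1) / ((n + 1).factorial : ℝ)) ^ 2 ≤
        (M n / (n.factorial : ℝ)) * (M (n + 2) / ((n + 2).factorial : ℝ))) ∧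
  (∃ n₁ : ℕ, ∀ n : ℕ, n₁ ≤ n → 1 ≤ n →
      (M n / (n.factorial : ℝ)) ^ ((1 : ℝ) / (n : ℝ)) ≤
        (M (n + 1) / ((n + 1).factorial : ℝ)) ^ ((1 : ℝ) / ((n : ℝ) + 1))) ∧
  (∃ C : ℝ, 0 < C ∧ ∀ n : ℕ, 1 ≤ n →
      M (n + 1) / ((n + 1).factorial : ℝ) ≤
        C * (M n / (n.factorial : ℝ)) ^ ((1 : ℝ) + 1 / (n : ℝ)))


open Finset Filter


/-- Stirling numbers of the second kind. -/
def myS2 : ℕ → ℕ → ℕ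
  | 0, 0 => 1
  | 0, _ + 1 => 0
  | _ + 1, 0 => 0
  | n + 1, k + 1 => (k + 1) * myS2 n (k + 1) + myS2 n k

/-- Signed Stirling numbers of the first kind. -/
def myS1 : ℕ → ℕ → ℤ
  | 0, 0 => 1
  | 0, _ + 1 => 0
  | _ + 1, 0 => 0
  | n + 1, k + 1 => myS1 n k - n * myS1 n (k + 1)

lemma myS2_zero_of_lt : ∀ {n k : ℕ}, n < k → myS2 n k = 0
  | 0, 0, h => absurd h (by omega)
  | 0, _ + 1, _ => rfl
  | _ + 1, 0, h => absurd h (by omega)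
  | n + 1, k + 1, h => by
      rw [myS2, myS2_zero_of_lt (show n < k + 1 by omega),
        myS2_zero_of_lt (show n < k by omega)]; ring

lemma myS1_zero_of_lt : ∀ {n k : ℕ}, n < k → myS1 n k = 0
  | 0, 0, h => absurd h (by omega)
  | 0, _ + 1, _ => rfl
  | _ + 1, 0, h => absurd h (by omega)
  | n + 1, k + 1, h => by
      rw [myS1, myS1_zero_of_lt (show n < k + 1 by omega),
        myS1_zero_of_lt (show n < k by omega)]; ring

private lemma step_key {n k : ℕ} (h : k ≤ n) :
    (n + 1) * (n.choose (k + 1) * (n + 1) ^ (n - (k + 1))) ≤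
      n.choose (k + 1) * (n + 1) ^ (n - k) := by
  rcases eq_or_lt_of_le h with rfl | h'
  · simp [Nat.choose_succ_self]
  · have hj : n - k = (n - (k + 1)) + 1 := by omega
    rw [hj, pow_succ]
    exact le_of_eq (by ring)

lemma myS2_le : ∀ n k : ℕ, myS2 n k ≤ n.choose k * n ^ (n - k)
  | 0, 0 => le_refl 1
  | 0, k + 1 => by simp [myS2]
  | n + 1, 0 => by simp [myS2]
  | n + 1, k + 1 => by
      rw [myS2]
      rcases lt_or_ge n k with h | h
      · rw [myS2_zero_of_lt (show n < k + 1 by omega), myS2_zero_of_lt h]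
        simp
      calc (k + 1) * myS2 n (k + 1) + myS2 n k
          ≤ (k + 1) * (n.choose (k + 1) * n ^ (n - (k + 1))) + n.choose k * n ^ (n - k) := by
            gcongr <;> [exact myS2_le n (k+1); exact myS2_le n k]
        _ ≤ (n + 1) * (n.choose (k + 1) * (n + 1) ^ (n - (k + 1))) +
              n.choose k * (n + 1) ^ (n - k) := by gcongr <;> omega
        _ ≤ n.choose (k + 1) * (n + 1) ^ (n - k) + n.choose k * (n + 1) ^ (n - k) :=
            Nat.add_le_add (step_key h) le_rfl
        _ = (n + 1).choose (k + 1) * (n + 1) ^ (n + 1 - (k + 1)) := by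
            rw [Nat.succ_sub_succ, Nat.choose_succ_succ]; ring
  termination_by n k => n

lemma myS1_natAbs_le : ∀ n k : ℕ, (myS1 n k).natAbs ≤ n.choose k * n ^ (n - k)
  | 0, 0 => le_refl 1
  | 0, k + 1 => by simp [myS1]
  | n + 1, 0 => by simp [myS1]
  | n + 1, k + 1 => by
      rw [myS1]
      rcases lt_or_ge n k with h | h
      · rw [myS1_zero_of_lt (show n < k + 1 by omega), myS1_zero_of_lt h]
        simp
      calc (myS1 n k - n * myS1 n (k + 1)).natAbs
          ≤ (myS1 n k).natAbs + n * (myS1 n (k + 1)).natAbs := by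
            refine (Int.natAbs_sub_le _ _).trans ?_
            rw [Int.natAbs_mul]; simp
        _ ≤ n.choose k * n ^ (n - k) + n * (n.choose (k + 1) * n ^ (n - (k + 1))) := by
            gcongr <;> [exact myS1_natAbs_le n k; exact myS1_natAbs_le n (k+1)]
        _ ≤ n.choose k * (n + 1) ^ (n - k) +
              (n + 1) * (n.choose (k + 1) * (n + 1) ^ (n - (k + 1))) := by gcongr <;> omega
        _ ≤ n.choose k * (n + 1) ^ (n - k) + n.choose (k + 1) * (n + 1) ^ (n - k) :=
            Nat.add_le_add le_rfl (step_key h)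
        _ = (n + 1).choose (k + 1) * (n + 1) ^ (n + 1 - (k + 1)) := by
            rw [Nat.succ_sub_succ, Nat.choose_succ_succ]; ring
  termination_by n k => n


section identities

variable {f g : ℝ → ℝ}

lemma contDiffOn_iteratedDeriv_my (hf : ContDiffOn ℝ (⊤ : ℕ∞) f (Set.Ioi 0)) :
    ∀ k : ℕ, ContDiffOn ℝ (⊤ : ℕ∞) (iteratedDeriv k f) (Set.Ioi 0) := by
  intro k
  induction k with
  | zero => simpa [iteratedDeriv_zero] using hf
  | succ k ih =>
      rw [iteratedDeriv_succ]
      exact ih.deriv_of_isOpen isOpen_Ioi (by simp)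

lemma hfd_my (hf : ContDiffOn ℝ (⊤ : ℕ∞) f (Set.Ioi 0)) (k : ℕ) {t : ℝ} (ht : 0 < t) :
    HasDerivAt (iteratedDeriv k f) (iteratedDeriv (k + 1) f t) t := by
  have h1 := contDiffOn_iteratedDeriv_my hf k
  have h2 : DifferentiableAt ℝ (iteratedDeriv k f) t :=
    (h1.differentiableOn (by simp)).differentiableAt (isOpen_Ioi.mem_nhds ht)
  rw [iteratedDeriv_succ]
  exact h2.hasDerivAt

lemma hgC_my (hf : ContDiffOn ℝ (⊤ : ℕ∞) f (Set.Ioi 0)) (hg : ∀ x, g x = f (Real.exp x)) :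
    ContDiff ℝ (⊤ : ℕ∞) g := by
  have : g = f ∘ Real.exp := funext hg
  rw [this, ← contDiffOn_univ]
  exact hf.comp Real.contDiff_exp.contDiffOn fun x _ => Real.exp_pos x

lemma hgd_my (hgC : ContDiff ℝ (⊤ : ℕ∞) g) (k : ℕ) (x : ℝ) :
    HasDerivAt (iteratedDeriv k g) (iteratedDeriv (k + 1) g x) x := by
  rw [iteratedDeriv_succ]
  exact ((hgC.differentiable_iteratedDeriv k
    (by exact_mod_cast lt_top_iff_ne_top.mpr (by simp))).differentiableAt).hasDerivAt

end identities

section A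
variable {f g : ℝ → ℝ}

/-- derivative of a single term `e^{kx} F_k(e^x)`. -/
lemma term_hasDerivAt (hf : ContDiffOn ℝ (⊤ : ℕ∞) f (Set.Ioi 0)) (k : ℕ) (x : ℝ) :
    HasDerivAt (fun y => Real.exp y ^ k * iteratedDeriv k f (Real.exp y))
      ((k : ℝ) * (Real.exp x ^ k * iteratedDeriv k f (Real.exp x)) +
        Real.exp x ^ (k + 1) * iteratedDeriv (k + 1) f (Real.exp x)) x := by
  have he : HasDerivAt Real.exp (Real.exp x) x := Real.hasDerivAt_exp x
  have h1 : HasDerivAt (fun y => Real.exp y ^ k)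
      ((k : ℝ) * Real.exp x ^ (k - 1) * Real.exp x) x := he.pow k
  have h2 : HasDerivAt (fun y => iteratedDeriv k f (Real.exp y))
      (iteratedDeriv (k + 1) f (Real.exp x) * Real.exp x) x :=
    (hfd_my hf k (Real.exp_pos x)).comp x he
  have h3 := h1.fun_mul h2
  refine h3.congr_deriv ?_
  cases k with
  | zero => simp [mul_comm]
  | succ j =>
      have hj : j + 1 - 1 = j := rfl
      rw [hj]
      ring

lemma identA (hf : ContDiffOn ℝ (⊤ : ℕ∞) f (Set.Ioi 0)) (hg : ∀ x, g x = f (Real.exp x)) :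
    ∀ (n : ℕ) (x : ℝ),
      iteratedDeriv n g x =
        ∑ k ∈ range (n + 1),
          (myS2 n k : ℝ) * (Real.exp x ^ k * iteratedDeriv k f (Real.exp x)) := by
  intro n
  induction n with
  | zero => intro x; simp [myS2, hg x]
  | succ n ih =>
      intro x
      rw [iteratedDeriv_succ]
      have hfun : iteratedDeriv n g = fun y => ∑ k ∈ range (n + 1),
          (myS2 n k : ℝ) * (Real.exp y ^ k * iteratedDeriv k f (Real.exp y)) := funext ih
      rw [hfun]
      have hder : HasDerivAt (fun y => ∑ k ∈ range (n + 1),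
          (myS2 n k : ℝ) * (Real.exp y ^ k * iteratedDeriv k f (Real.exp y)))
          (∑ k ∈ range (n + 1), (myS2 n k : ℝ) *
            ((k : ℝ) * (Real.exp x ^ k * iteratedDeriv k f (Real.exp x)) +
              Real.exp x ^ (k + 1) * iteratedDeriv (k + 1) f (Real.exp x))) x :=
        HasDerivAt.fun_sum fun k _ => (term_hasDerivAt hf k x).const_mul _
      rw [hder.deriv]
      -- now the combinatorial identity
      set e := Real.exp x with he
      set F : ℕ → ℝ := fun k => iteratedDeriv k f e with hF
      have hFs : ∀ k, iteratedDeriv (k + 1) f e = F (k + 1) := fun k => rfl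
      -- split LHS
      have split : ∑ k ∈ range (n + 1), (myS2 n k : ℝ) *
            ((k : ℝ) * (e ^ k * F k) + e ^ (k + 1) * F (k + 1)) =
          (∑ k ∈ range (n + 1), (k : ℝ) * (myS2 n k : ℝ) * (e ^ k * F k)) +
            ∑ k ∈ range (n + 1), (myS2 n k : ℝ) * (e ^ (k + 1) * F (k + 1)) := by
        rw [← Finset.sum_add_distrib]
        exact Finset.sum_congr rfl fun k _ => by ring
      rw [split]
      -- rewrite RHS
      have hrhs : ∑ k ∈ range (n + 1 + 1), (myS2 (n + 1) k : ℝ) * (e ^ k * F k) =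
          ∑ k ∈ range (n + 1), (((k : ℝ) + 1) * (myS2 n (k + 1) : ℝ) + (myS2 n k : ℝ)) *
            (e ^ (k + 1) * F (k + 1)) := by
        rw [Finset.sum_range_succ']
        have h0 : (myS2 (n + 1) 0 : ℝ) = 0 := by norm_num [myS2]
        rw [h0]
        simp only [zero_mul, add_zero]
        refine Finset.sum_congr rfl fun k _ => ?_
        have : myS2 (n + 1) (k + 1) = (k + 1) * myS2 n (k + 1) + myS2 n k := rfl
        rw [this]
        push_cast
        ring
      rw [hrhs]
      have expand : ∑ k ∈ range (n + 1),
            (((k : ℝ) + 1) * (myS2 n (k + 1) : ℝ) + (myS2 n k : ℝ)) * (e ^ (k + 1) * F (k + 1)) =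
          (∑ k ∈ range (n + 1), ((k : ℝ) + 1) * (myS2 n (k + 1) : ℝ) * (e ^ (k + 1) * F (k + 1))) +
            ∑ k ∈ range (n + 1), (myS2 n k : ℝ) * (e ^ (k + 1) * F (k + 1)) := by
        rw [← Finset.sum_add_distrib]
        exact Finset.sum_congr rfl fun k _ => by ring
      rw [expand]
      congr 1
      -- reindex the first sum
      have reidx : ∑ k ∈ range (n + 2), (k : ℝ) * (myS2 n k : ℝ) * (e ^ k * F k) =
          ∑ k ∈ range (n + 1), ((k : ℝ) + 1) * (myS2 n (k + 1) : ℝ) *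
            (e ^ (k + 1) * F (k + 1)) := by
        rw [Finset.sum_range_succ']
        push_cast
        simp
      have htop : ∑ k ∈ range (n + 2), (k : ℝ) * (myS2 n k : ℝ) * (e ^ k * F k) =
          ∑ k ∈ range (n + 1), (k : ℝ) * (myS2 n k : ℝ) * (e ^ k * F k) := by
        rw [Finset.sum_range_succ, myS2_zero_of_lt (Nat.lt_succ_self n)]
        simp
      rw [← htop, reidx]
end A

section B
variable {f g : ℝ → ℝ}

lemma identB (hf : ContDiffOn ℝ (⊤ : ℕ∞) f (Set.Ioi 0)) (hg : ∀ x, g x = f (Real.exp x)) :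
    ∀ (n : ℕ) (x : ℝ),
      Real.exp x ^ n * iteratedDeriv n f (Real.exp x) =
        ∑ k ∈ range (n + 1), (myS1 n k : ℝ) * iteratedDeriv k g x := by
  have hgC : ContDiff ℝ (⊤ : ℕ∞) g := hgC_my hf hg
  intro n
  induction n with
  | zero => intro x; simp [myS1, hg x]
  | succ n ih =>
      intro x
      -- derivative of both sides of ih
      have hu : HasDerivAt (fun y => Real.exp y ^ n * iteratedDeriv n f (Real.exp y))
          ((n : ℝ) * (Real.exp x ^ n * iteratedDeriv n f (Real.exp x)) +
            Real.exp x ^ (n + 1) * iteratedDeriv (n + 1) f (Real.exp x)) x :=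
        term_hasDerivAt hf n x
      have huv : (fun y => Real.exp y ^ n * iteratedDeriv n f (Real.exp y)) =
          fun y => ∑ k ∈ range (n + 1), (myS1 n k : ℝ) * iteratedDeriv k g y := funext ih
      rw [huv] at hu
      have hv : HasDerivAt (fun y => ∑ k ∈ range (n + 1), (myS1 n k : ℝ) * iteratedDeriv k g y)
          (∑ k ∈ range (n + 1), (myS1 n k : ℝ) * iteratedDeriv (k + 1) g x) x :=
        HasDerivAt.fun_sum fun k _ => (hgd_my hgC k x).const_mul _
      have heq := hu.unique hv
      have key : Real.exp x ^ (n + 1) * iteratedDeriv (n + 1) f (Real.exp x) =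
          (∑ k ∈ range (n + 1), (myS1 n k : ℝ) * iteratedDeriv (k + 1) g x) -
            (n : ℝ) * ∑ k ∈ range (n + 1), (myS1 n k : ℝ) * iteratedDeriv k g x := by
        rw [← ih x, ← heq]; ring
      rw [key]
      set G : ℕ → ℝ := fun k => iteratedDeriv k g x with hG
      -- RHS of goal
      have hrhs : ∑ k ∈ range (n + 1 + 1), (myS1 (n + 1) k : ℝ) * G k =
          (∑ k ∈ range (n + 1), (myS1 n k : ℝ) * G (k + 1)) -
            (n : ℝ) * ∑ k ∈ range (n + 1), (myS1 n (k + 1) : ℝ) * G (k + 1) := by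
        rw [Finset.sum_range_succ']
        have h0 : (myS1 (n + 1) 0 : ℝ) = 0 := by norm_num [myS1]
        rw [h0]
        rw [Finset.mul_sum, ← Finset.sum_sub_distrib]
        simp only [zero_mul, add_zero]
        refine Finset.sum_congr rfl fun k _ => ?_
        have : myS1 (n + 1) (k + 1) = myS1 n k - n * myS1 n (k + 1) := rfl
        rw [this]
        push_cast
        ring
      have hshift : (n : ℝ) * ∑ k ∈ range (n + 1), (myS1 n (k + 1) : ℝ) * G (k + 1) =
          (n : ℝ) * ∑ k ∈ range (n + 1), (myS1 n k : ℝ) * G k := by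
        have h1 : ∑ k ∈ range (n + 2), (myS1 n k : ℝ) * G k =
            (∑ k ∈ range (n + 1), (myS1 n (k + 1) : ℝ) * G (k + 1)) + (myS1 n 0 : ℝ) * G 0 :=
          Finset.sum_range_succ' _ _
        have h2 : ∑ k ∈ range (n + 2), (myS1 n k : ℝ) * G k =
            ∑ k ∈ range (n + 1), (myS1 n k : ℝ) * G k := by
          rw [Finset.sum_range_succ, myS1_zero_of_lt (Nat.lt_succ_self n)]
          simp
        have h3 : (n : ℝ) * ((myS1 n 0 : ℝ) * G 0) = 0 := by
          cases n with
          | zero => simp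
          | succ m => norm_num [myS1]
        calc (n : ℝ) * ∑ k ∈ range (n + 1), (myS1 n (k + 1) : ℝ) * G (k + 1)
            = (n : ℝ) * (∑ k ∈ range (n + 2), (myS1 n k : ℝ) * G k) -
                (n : ℝ) * ((myS1 n 0 : ℝ) * G 0) := by rw [h1]; ring
          _ = (n : ℝ) * ∑ k ∈ range (n + 1), (myS1 n k : ℝ) * G k := by
              rw [h2, h3]; ring
      rw [hrhs, hshift]
end B


/-- eventual bound + positivity gives a global bound. -/
lemma global_of_eventually (P Q : ℕ → ℝ) (hP : ∀ n, 0 ≤ P n) (hQ : ∀ n, 0 < Q n)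
    (n₂ : ℕ) (C₀ : ℝ) (hev : ∀ n, n₂ ≤ n → P n ≤ C₀ * Q n) :
    ∃ C : ℝ, 0 < C ∧ ∀ n, P n ≤ C * Q n := by
  have hsum0 : (0:ℝ) ≤ ∑ k ∈ range n₂, P k / Q k :=
    Finset.sum_nonneg fun k _ => div_nonneg (hP k) (hQ k).le
  refine ⟨max C₀ 0 + (∑ k ∈ range n₂, P k / Q k) + 1, by
    have := le_max_right C₀ (0:ℝ); linarith, fun n => ?_⟩
  set C := max C₀ 0 + (∑ k ∈ range n₂, P k / Q k) + 1 with hC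
  rcases le_or_gt n₂ n with h | h
  · calc P n ≤ C₀ * Q n := hev n h
      _ ≤ C * Q n := by
          apply mul_le_mul_of_nonneg_right _ (hQ n).le
          have h1 : C₀ ≤ max C₀ 0 := le_max_left _ _
          rw [hC]; linarith
  · have h1 : P n / Q n ≤ ∑ k ∈ range n₂, P k / Q k :=
      Finset.single_le_sum (f := fun k => P k / Q k)
        (fun k _ => div_nonneg (hP k) (hQ k).le) (Finset.mem_range.mpr h)
    have h2 : P n = (P n / Q n) * Q n := by
      rw [div_mul_eq_mul_div, mul_div_assoc, div_self (hQ n).ne', mul_one]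
    rw [h2]
    apply mul_le_mul_of_nonneg_right _ (hQ n).le
    have h3 : (0:ℝ) ≤ max C₀ 0 := le_max_right _ _
    rw [hC]; linarith

lemma key_est (N : ℕ → ℝ) (hpos : ∀ n, 0 < N n) (n₁ : ℕ)
    (hmono : ∀ n : ℕ, n₁ ≤ n → 1 ≤ n →
      (N n / (n.factorial : ℝ)) ^ ((1 : ℝ) / (n : ℝ)) ≤
        (N (n + 1) / ((n + 1).factorial : ℝ)) ^ ((1 : ℝ) / ((n : ℝ) + 1)))
    (hτ : Tendsto (fun n : ℕ => (N n / (n.factorial : ℝ)) ^ ((1 : ℝ) / (n : ℝ)))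
      atTop atTop)
    {η η' : ℝ} (hη : 1 < η) (hηη' : η < η') :
    ∃ C : ℝ, 0 < C ∧ ∀ n : ℕ,
      ∑ k ∈ range (n + 1), ((n.choose k : ℝ) * (n : ℝ) ^ (n - k)) * (η ^ k * N k) ≤
        C * (η' ^ n * N n) := by
  set m : ℕ → ℝ := fun n => N n / (n.factorial : ℝ) with hm
  have hmpos : ∀ n, 0 < m n := fun n => div_pos (hpos n) (by positivity)
  -- monotonicity chain
  have hchain : ∀ k n : ℕ, n₁ ≤ k → 1 ≤ k → k ≤ n →
      m k ^ ((1 : ℝ) / (k : ℝ)) ≤ m n ^ ((1 : ℝ) / (n : ℝ)) := by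
    intro k n hk1 hk2 hkn
    induction n, hkn using Nat.le_induction with
    | base => exact le_rfl
    | succ n hn ih =>
        refine ih.trans ?_
        have := hmono n (hk1.trans hn) (hk2.trans hn)
        push_cast
        push_cast at this
        exact this
  set ε : ℝ := Real.log (η' / η) with hε
  have hεpos : 0 < ε := Real.log_pos (by rw [lt_div_iff₀ (by linarith)]; linarith)
  obtain ⟨n₂', hn₂'⟩ : ∃ n₂', ∀ n ≥ n₂', max 1 ε⁻¹ ≤ m n ^ ((1 : ℝ) / (n : ℝ)) :=
    Filter.eventually_atTop.mp (hτ.eventually_ge_atTop _)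
  set n₂ : ℕ := max n₂' (n₁ + 1) with hn₂
  set B : ℝ := (∑ k ∈ range n₂, m k) + 1 with hB
  have hB1 : 1 ≤ B := by
    have : (0:ℝ) ≤ ∑ k ∈ range n₂, m k :=
      Finset.sum_nonneg fun k _ => (hmpos k).le
    rw [hB]; linarith
  have hBk : ∀ k, k < n₂ → m k ≤ B := by
    intro k hk
    have := Finset.single_le_sum (f := m) (fun i _ => (hmpos i).le) (Finset.mem_range.mpr hk)
    rw [hB]; linarith
  -- main pointwise bound for large n
  have hmain : ∀ n : ℕ, n₂ ≤ n → ∀ k : ℕ, k ≤ n → m k ≤ B * ε ^ (n - k) * m n := by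
    intro n hn k hkn
    have hn1 : 1 ≤ n := le_trans (by omega) hn
    set a : ℝ := m n ^ ((1 : ℝ) / (n : ℝ)) with ha
    have ha0 : 0 < a := Real.rpow_pos_of_pos (hmpos n) _
    have ha1 : 1 ≤ a := le_trans (le_max_left _ _) (hn₂' n (le_trans (le_max_left _ _) hn))
    have haε : ε⁻¹ ≤ a := le_trans (le_max_right _ _) (hn₂' n (le_trans (le_max_left _ _) hn))
    have han : a ^ n = m n := by
      rw [ha, ← Real.rpow_natCast (m n ^ ((1:ℝ)/(n:ℝ))) n, ← Real.rpow_mul (hmpos n).le]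
      rw [one_div, inv_mul_cancel₀ (Nat.cast_ne_zero.mpr (by omega) : (n:ℝ) ≠ 0)]
      exact Real.rpow_one _
    have hεa : 1 ≤ ε * a := by
      calc (1:ℝ) = ε * ε⁻¹ := by rw [mul_inv_cancel₀ hεpos.ne']
        _ ≤ ε * a := by gcongr
    -- m k ≤ B * a ^ k
    have hstep : m k ≤ B * a ^ k := by
      rcases lt_or_ge k n₂ with hk | hk
      · calc m k ≤ B := hBk k hk
          _ ≤ B * a ^ k := le_mul_of_one_le_right (by linarith) (one_le_pow₀ ha1)
      · have hk1 : 1 ≤ k := le_trans (by omega) hk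
        have hkn₁ : n₁ ≤ k := le_trans (by omega) hk
        have h1 : m k ^ ((1:ℝ)/(k:ℝ)) ≤ a := hchain k n hkn₁ hk1 hkn
        have h2 : m k = (m k ^ ((1:ℝ)/(k:ℝ))) ^ k := by
          rw [← Real.rpow_natCast (m k ^ ((1:ℝ)/(k:ℝ))) k, ← Real.rpow_mul (hmpos k).le]
          rw [one_div, inv_mul_cancel₀ (Nat.cast_ne_zero.mpr (by omega) : (k:ℝ) ≠ 0)]
          rw [Real.rpow_one]
        calc m k = (m k ^ ((1:ℝ)/(k:ℝ))) ^ k := h2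
          _ ≤ a ^ k := by gcongr; exact (Real.rpow_pos_of_pos (hmpos k) _).le
          _ ≤ B * a ^ k := le_mul_of_one_le_left (by positivity) hB1
    calc m k ≤ B * a ^ k := hstep
      _ ≤ B * (ε ^ (n - k) * a ^ (n - k) * a ^ k) := by
          apply mul_le_mul_of_nonneg_left _ (by linarith)
          have : (1:ℝ) ≤ (ε * a) ^ (n - k) := one_le_pow₀ hεa
          rw [mul_pow] at this
          nlinarith [pow_pos ha0 k, pow_pos ha0 (n-k), pow_pos hεpos (n-k)]
      _ = B * ε ^ (n - k) * m n := by
          have hmn : a ^ (n - k) * a ^ k = m n := by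
            rw [← pow_add, Nat.sub_add_cancel hkn, han]
          rw [← hmn]; ring
  -- the sum bound for large n
  have hsum : ∀ n : ℕ, n₂ ≤ n →
      ∑ k ∈ range (n + 1), ((n.choose k : ℝ) * (n : ℝ) ^ (n - k)) * (η ^ k * N k) ≤
        B * (η' ^ n * N n) := by
    intro n hn
    have hNm : ∀ k : ℕ, N k = (k.factorial : ℝ) * m k := by
      intro k; rw [hm]; field_simp
    have step1 : ∀ k ∈ range (n + 1),
        ((n.choose k : ℝ) * (n : ℝ) ^ (n - k)) * (η ^ k * N k) ≤
          (B * m n) * (((n.factorial : ℝ) / ((n - k).factorial : ℝ)) *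
            (((n : ℝ) * ε) ^ (n - k) * η ^ k)) := by
      intro k hk
      have hkn : k ≤ n := Nat.lt_succ_iff.mp (Finset.mem_range.mp hk)
      have hck : (n.choose k : ℝ) * (k.factorial : ℝ) =
          (n.factorial : ℝ) / ((n - k).factorial : ℝ) := by
        rw [eq_div_iff (by positivity)]
        exact_mod_cast Nat.choose_mul_factorial_mul_factorial hkn
      have hmk := hmain n hn k hkn
      calc ((n.choose k : ℝ) * (n : ℝ) ^ (n - k)) * (η ^ k * N k)
          = ((n.choose k : ℝ) * (k.factorial : ℝ)) * ((n : ℝ) ^ (n - k) * η ^ k * m k) := by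
            rw [hNm k]; ring
        _ ≤ ((n.choose k : ℝ) * (k.factorial : ℝ)) *
              ((n : ℝ) ^ (n - k) * η ^ k * (B * ε ^ (n - k) * m n)) := by
            gcongr
        _ = (B * m n) * (((n.factorial : ℝ) / ((n - k).factorial : ℝ)) *
              (((n : ℝ) * ε) ^ (n - k) * η ^ k)) := by
            rw [← hck, mul_pow]; ring
    have step2 : ∀ k ∈ range (n + 1),
        ((n.factorial : ℝ) / ((n - k).factorial : ℝ)) * (((n : ℝ) * ε) ^ (n - k) * η ^ k) ≤
          ((n.factorial : ℝ) * η ^ n) * (((n : ℝ) * ε) ^ (n - k) / ((n - k).factorial : ℝ)) := by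
      intro k hk
      have hkn : k ≤ n := Nat.lt_succ_iff.mp (Finset.mem_range.mp hk)
      have hηk : η ^ k ≤ η ^ n := pow_le_pow_right₀ hη.le hkn
      calc ((n.factorial : ℝ) / ((n - k).factorial : ℝ)) * (((n : ℝ) * ε) ^ (n - k) * η ^ k)
          ≤ ((n.factorial : ℝ) / ((n - k).factorial : ℝ)) * (((n : ℝ) * ε) ^ (n - k) * η ^ n) := by
            gcongr
        _ = ((n.factorial : ℝ) * η ^ n) * (((n : ℝ) * ε) ^ (n - k) / ((n - k).factorial : ℝ)) := by
            ring
    have step3 : ∑ k ∈ range (n + 1), (((n : ℝ) * ε) ^ (n - k) / ((n - k).factorial : ℝ)) ≤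
        Real.exp ((n : ℝ) * ε) := by
      have hrefl : ∑ k ∈ range (n + 1), (((n : ℝ) * ε) ^ (n - k) / ((n - k).factorial : ℝ)) =
          ∑ j ∈ range (n + 1), (((n : ℝ) * ε) ^ j / (j.factorial : ℝ)) := by
        rw [← Finset.sum_range_reflect (fun j => ((n : ℝ) * ε) ^ j / (j.factorial : ℝ)) (n + 1)]
        refine Finset.sum_congr rfl fun k hk => ?_
        congr 1 <;> congr 1 <;> omega
      rw [hrefl]
      exact Real.sum_le_exp_of_nonneg (by positivity) (n + 1)
    have hexp : Real.exp ((n : ℝ) * ε) = (η' / η) ^ n := by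
      rw [Real.exp_nat_mul, hε, Real.exp_log (div_pos (by linarith) (by linarith))]
    calc ∑ k ∈ range (n + 1), ((n.choose k : ℝ) * (n : ℝ) ^ (n - k)) * (η ^ k * N k)
        ≤ ∑ k ∈ range (n + 1), (B * m n) * (((n.factorial : ℝ) / ((n - k).factorial : ℝ)) *
            (((n : ℝ) * ε) ^ (n - k) * η ^ k)) := Finset.sum_le_sum step1
      _ ≤ ∑ k ∈ range (n + 1), (B * m n) * (((n.factorial : ℝ) * η ^ n) *
            (((n : ℝ) * ε) ^ (n - k) / ((n - k).factorial : ℝ))) := by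
          refine Finset.sum_le_sum fun k hk => ?_
          have h := step2 k hk
          have hBm : 0 ≤ B * m n := mul_nonneg (by linarith) (hmpos n).le
          exact mul_le_mul_of_nonneg_left h hBm
      _ = (B * m n * ((n.factorial : ℝ) * η ^ n)) *
            ∑ k ∈ range (n + 1), (((n : ℝ) * ε) ^ (n - k) / ((n - k).factorial : ℝ)) := by
          rw [Finset.mul_sum]
          exact Finset.sum_congr rfl fun k _ => by ring
      _ ≤ (B * m n * ((n.factorial : ℝ) * η ^ n)) * Real.exp ((n : ℝ) * ε) := by
          apply mul_le_mul_of_nonneg_left step3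
          have h1 : (0:ℝ) ≤ B := by linarith
          have h2 := (hmpos n).le
          have h3 : (0:ℝ) ≤ (n.factorial : ℝ) * η ^ n := by positivity
          exact mul_nonneg (mul_nonneg h1 h2) h3
      _ = B * (η' ^ n * N n) := by
          rw [hexp, hNm n, div_pow]
          have hηn : (η : ℝ) ^ n ≠ 0 := by positivity
          field_simp
  -- combine
  refine global_of_eventually _ _ (fun n => Finset.sum_nonneg fun k _ => ?_) (fun n => ?_)
    n₂ B hsum
  · exact mul_nonneg (by positivity) (mul_nonneg (by positivity) (hpos k).le)
  · exact mul_pos (pow_pos (by linarith) n) (hpos n)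

/-- For a regular, non-analytic sequence `N` and a smooth `f` on `(0,∞)`
with `g x = f (exp x)`, the bound `tⁿ·|f⁽ⁿ⁾(t)| ≤ C·ηⁿ·N n` on `(0,1]` (for every `η > 1`)
holds iff the bound `|g⁽ⁿ⁾(x)| ≤ C·ηⁿ·N n` on `(−∞,0]` (for every `η > 1`) holds. -/
theorem stmt_3
    (N : ℕ → ℝ) (hN : RegularSeq N)
    (hτ : Filter.Tendsto (fun n : ℕ => (N n / (n.factorial : ℝ)) ^ ((1 : ℝ) / (n : ℝ)))
      Filter.atTop Filter.atTop)
    (f : ℝ → ℝ) (hf : ContDiffOn ℝ (⊤ : ℕ∞) f (Set.Ioi 0))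
    (g : ℝ → ℝ) (hg : ∀ x : ℝ, g x = f (Real.exp x)) :
    (∀ η : ℝ, 1 < η → ∃ C : ℝ, 0 < C ∧ ∀ t ∈ Set.Ioc (0 : ℝ) 1, ∀ n : ℕ,
        t ^ n * |iteratedDeriv n f t| ≤ C * η ^ n * N n) ↔
    (∀ η : ℝ, 1 < η → ∃ C : ℝ, 0 < C ∧ ∀ x : ℝ, x ≤ 0 → ∀ n : ℕ,
        |iteratedDeriv n g x| ≤ C * η ^ n * N n) := by
  obtain ⟨hpos, -, ⟨n₁, hmono⟩, -⟩ := hN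
  constructor
  · intro hP η' hη'
    have hη : 1 < (1 + η') / 2 := by linarith
    have hηη' : (1 + η') / 2 < η' := by linarith
    set η : ℝ := (1 + η') / 2 with hηd
    obtain ⟨C₁, hC₁, hPb⟩ := hP η hη
    obtain ⟨C₂, hC₂, hK⟩ := key_est N hpos n₁ hmono hτ hη hηη'
    refine ⟨C₁ * C₂, by positivity, fun x hx n => ?_⟩
    have htm : Real.exp x ∈ Set.Ioc (0 : ℝ) 1 := ⟨Real.exp_pos x, Real.exp_le_one_iff.mpr hx⟩
    have hstep : ∀ k ∈ range (n + 1),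
        |(myS2 n k : ℝ) * (Real.exp x ^ k * iteratedDeriv k f (Real.exp x))| ≤
          ((n.choose k : ℝ) * (n : ℝ) ^ (n - k)) * (C₁ * (η ^ k * N k)) := by
      intro k hk
      have hS2 : (myS2 n k : ℝ) ≤ (n.choose k : ℝ) * (n : ℝ) ^ (n - k) := by
        exact_mod_cast myS2_le n k
      have h1 : |(myS2 n k : ℝ) * (Real.exp x ^ k * iteratedDeriv k f (Real.exp x))| =
          (myS2 n k : ℝ) * (Real.exp x ^ k * |iteratedDeriv k f (Real.exp x)|) := by
        rw [abs_mul, abs_mul, Nat.abs_cast, abs_of_nonneg (by positivity : (0:ℝ) ≤ Real.exp x ^ k)]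
      rw [h1]
      have h2 := hPb (Real.exp x) htm k
      calc (myS2 n k : ℝ) * (Real.exp x ^ k * |iteratedDeriv k f (Real.exp x)|)
          ≤ (myS2 n k : ℝ) * (C₁ * η ^ k * N k) :=
            mul_le_mul_of_nonneg_left h2 (by positivity)
        _ ≤ ((n.choose k : ℝ) * (n : ℝ) ^ (n - k)) * (C₁ * η ^ k * N k) := by
            apply mul_le_mul_of_nonneg_right hS2
            have := (hpos k).le
            positivity
        _ = ((n.choose k : ℝ) * (n : ℝ) ^ (n - k)) * (C₁ * (η ^ k * N k)) := by ring
    calc |iteratedDeriv n g x|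
        = |∑ k ∈ range (n + 1),
            (myS2 n k : ℝ) * (Real.exp x ^ k * iteratedDeriv k f (Real.exp x))| := by
          rw [identA hf hg n x]
      _ ≤ ∑ k ∈ range (n + 1),
            |(myS2 n k : ℝ) * (Real.exp x ^ k * iteratedDeriv k f (Real.exp x))| :=
          Finset.abs_sum_le_sum_abs _ _
      _ ≤ ∑ k ∈ range (n + 1),
            ((n.choose k : ℝ) * (n : ℝ) ^ (n - k)) * (C₁ * (η ^ k * N k)) :=
          Finset.sum_le_sum hstep
      _ = C₁ * ∑ k ∈ range (n + 1),
            ((n.choose k : ℝ) * (n : ℝ) ^ (n - k)) * (η ^ k * N k) := by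
          rw [Finset.mul_sum]
          exact Finset.sum_congr rfl fun k _ => by ring
      _ ≤ C₁ * (C₂ * (η' ^ n * N n)) := mul_le_mul_of_nonneg_left (hK n) hC₁.le
      _ = C₁ * C₂ * η' ^ n * N n := by ring
  · intro hQ η' hη'
    have hη : 1 < (1 + η') / 2 := by linarith
    have hηη' : (1 + η') / 2 < η' := by linarith
    set η : ℝ := (1 + η') / 2 with hηd
    obtain ⟨C₁, hC₁, hQb⟩ := hQ η hη
    obtain ⟨C₂, hC₂, hK⟩ := key_est N hpos n₁ hmono hτ hη hηη'
    refine ⟨C₁ * C₂, by positivity, fun t ht n => ?_⟩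
    set x : ℝ := Real.log t with hxd
    have hx : x ≤ 0 := Real.log_nonpos ht.1.le ht.2
    have hex : Real.exp x = t := Real.exp_log ht.1
    have hstep : ∀ k ∈ range (n + 1),
        |(myS1 n k : ℝ) * iteratedDeriv k g x| ≤
          ((n.choose k : ℝ) * (n : ℝ) ^ (n - k)) * (C₁ * (η ^ k * N k)) := by
      intro k hk
      have hS1 : |(myS1 n k : ℝ)| ≤ (n.choose k : ℝ) * (n : ℝ) ^ (n - k) := by
        have h0 : |(myS1 n k : ℝ)| = (((myS1 n k).natAbs : ℕ) : ℝ) := by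
          rw [Nat.cast_natAbs (n := myS1 n k), Int.cast_abs]
        rw [h0]
        exact_mod_cast myS1_natAbs_le n k
      have h2 := hQb x hx k
      calc |(myS1 n k : ℝ) * iteratedDeriv k g x|
          = |(myS1 n k : ℝ)| * |iteratedDeriv k g x| := abs_mul _ _
        _ ≤ ((n.choose k : ℝ) * (n : ℝ) ^ (n - k)) * (C₁ * η ^ k * N k) := by
            apply mul_le_mul hS1 h2 (abs_nonneg _)
            positivity
        _ = ((n.choose k : ℝ) * (n : ℝ) ^ (n - k)) * (C₁ * (η ^ k * N k)) := by ring
    calc t ^ n * |iteratedDeriv n f t|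
        = |t ^ n * iteratedDeriv n f t| := by
          rw [abs_mul, abs_of_nonneg (pow_nonneg ht.1.le n)]
      _ = |∑ k ∈ range (n + 1), (myS1 n k : ℝ) * iteratedDeriv k g x| := by
          rw [← hex, identB hf hg n x]
      _ ≤ ∑ k ∈ range (n + 1), |(myS1 n k : ℝ) * iteratedDeriv k g x| :=
          Finset.abs_sum_le_sum_abs _ _
      _ ≤ ∑ k ∈ range (n + 1),
            ((n.choose k : ℝ) * (n : ℝ) ^ (n - k)) * (C₁ * (η ^ k * N k)) :=
          Finset.sum_le_sum hstep
      _ = C₁ * ∑ k ∈ range (n + 1),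
            ((n.choose k : ℝ) * (n : ℝ) ^ (n - k)) * (η ^ k * N k) := by
          rw [Finset.mul_sum]
          exact Finset.sum_congr rfl fun k _ => by ring
      _ ≤ C₁ * (C₂ * (η' ^ n * N n)) := mul_le_mul_of_nonneg_left (hK n) hC₁.le
      _ = C₁ * C₂ * η' ^ n * N n := by ring
end

section
/- Let M and N be regular sequences with lim_{n→∞} (N_n/n!)^{1/n} = ∞, let a > 0 and η > 1. Let f : ℝ → ℝ be infinitely differentiable on an open neighborhood of [0,a], and suppose there exists C > 0 such that |f⁽ⁿ⁾(x)| ≤ C^{n+1}·M_n for all x ∈ [0,a] and all n, and such that the function g(ξ) = f(e^ξ) satisfies |g⁽ⁿ⁾(ξ)| ≤ C·(1/η)ⁿ·N_n for all ξ ≤ log a and all n. Then there exists C' > 0 such that xⁿ·|f⁽ⁿ⁾(x)| ≤ C'·N_n for all x ∈ (0,a] and all n ∈ ℕ. -/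
/-! ### Stirling-type coefficients -/

/-- Signed coefficients expressing `x^n f⁽ⁿ⁾(x)` in terms of derivatives of `g(ξ)=f(eˣ)`:
signed Stirling numbers of the first kind. -/
noncomputable def scoef : ℕ → ℕ → ℝ
  | 0, 0 => 1
  | 0, _ + 1 => 0
  | n + 1, 0 => -(n : ℝ) * scoef n 0
  | n + 1, k + 1 => scoef n k - (n : ℝ) * scoef n (k + 1)

/-- Unsigned Stirling numbers of the first kind. -/
def dcoef : ℕ → ℕ → ℕ
  | 0, 0 => 1
  | 0, _ + 1 => 0
  | n + 1, 0 => n * dcoef n 0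
  | n + 1, k + 1 => dcoef n k + n * dcoef n (k + 1)

@[simp] lemma scoef_zero_zero : scoef 0 0 = 1 := rfl
@[simp] lemma scoef_zero_succ (k : ℕ) : scoef 0 (k + 1) = 0 := rfl
@[simp] lemma scoef_succ_zero (n : ℕ) : scoef (n + 1) 0 = -(n : ℝ) * scoef n 0 := rfl
@[simp] lemma scoef_succ_succ (n k : ℕ) :
    scoef (n + 1) (k + 1) = scoef n k - (n : ℝ) * scoef n (k + 1) := rfl
@[simp] lemma dcoef_zero_zero : dcoef 0 0 = 1 := rfl
@[simp] lemma dcoef_zero_succ (k : ℕ) : dcoef 0 (k + 1) = 0 := rfl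
@[simp] lemma dcoef_succ_zero (n : ℕ) : dcoef (n + 1) 0 = n * dcoef n 0 := rfl
@[simp] lemma dcoef_succ_succ (n k : ℕ) :
    dcoef (n + 1) (k + 1) = dcoef n k + n * dcoef n (k + 1) := rfl

lemma scoef_eq_zero : ∀ n k : ℕ, n < k → scoef n k = 0 := by
  intro n
  induction n with
  | zero => intro k hk; match k, hk with | k + 1, _ => rfl
  | succ n ih =>
      intro k hk
      match k, hk with
      | k + 1, hk =>
        rw [scoef_succ_succ, ih k (by omega), ih (k + 1) (by omega)]
        ring

lemma dcoef_eq_zero : ∀ n k : ℕ, n < k → dcoef n k = 0 := by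
  intro n
  induction n with
  | zero => intro k hk; match k, hk with | k + 1, _ => rfl
  | succ n ih =>
      intro k hk
      match k, hk with
      | k + 1, hk =>
        rw [dcoef_succ_succ, ih k (by omega), ih (k + 1) (by omega)]
        simp

lemma abs_scoef_le : ∀ n k : ℕ, |scoef n k| ≤ (dcoef n k : ℝ) := by
  intro n
  induction n with
  | zero =>
      intro k
      match k with
      | 0 => simp
      | k + 1 => simp
  | succ n ih =>
      intro k
      match k with
      | 0 =>
          rw [scoef_succ_zero, dcoef_succ_zero, abs_mul, abs_neg, Nat.abs_cast]
          push_cast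
          exact mul_le_mul_of_nonneg_left (ih 0) (Nat.cast_nonneg n)
      | k + 1 =>
          rw [scoef_succ_succ, dcoef_succ_succ]
          refine (abs_sub _ _).trans ?_
          push_cast
          rw [abs_mul, Nat.abs_cast]
          exact add_le_add (ih k) (mul_le_mul_of_nonneg_left (ih (k + 1)) (Nat.cast_nonneg n))

lemma dcoef_mul_factorial_le : ∀ n k : ℕ, dcoef n k * k.factorial ≤ n.factorial * n.choose k := by
  intro n
  induction n with
  | zero =>
      intro k
      match k with
      | 0 => simp
      | k + 1 => simp
  | succ n ih =>
      intro k
      match k with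
      | 0 =>
          have := ih 0
          simp only [Nat.factorial_zero, mul_one, Nat.choose_zero_right] at this ⊢
          calc n * dcoef n 0 ≤ n * n.factorial := Nat.mul_le_mul_left n this
            _ ≤ (n + 1) * n.factorial := Nat.mul_le_mul_right _ (by omega)
            _ = (n + 1).factorial := (Nat.factorial_succ n).symm
      | k + 1 =>
          rcases le_or_gt (k + 1) (n + 1) with hk | hk
          · have h1 : dcoef n k * (k + 1).factorial ≤ (n + 1) * (n.factorial * n.choose k) := by
              rw [Nat.factorial_succ, ← Nat.mul_assoc, Nat.mul_comm (dcoef n k) (k + 1),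
                Nat.mul_assoc]
              calc (k + 1) * (dcoef n k * k.factorial) ≤ (k + 1) * (n.factorial * n.choose k) :=
                    Nat.mul_le_mul_left _ (ih k)
                _ ≤ (n + 1) * (n.factorial * n.choose k) := Nat.mul_le_mul_right _ hk
            have h2 : n * dcoef n (k + 1) * (k + 1).factorial ≤
                (n + 1) * (n.factorial * n.choose (k + 1)) := by
              rw [Nat.mul_assoc]
              calc n * (dcoef n (k + 1) * (k + 1).factorial) ≤
                    n * (n.factorial * n.choose (k + 1)) := Nat.mul_le_mul_left _ (ih (k + 1))
                _ ≤ (n + 1) * (n.factorial * n.choose (k + 1)) := Nat.mul_le_mul_right _ (by omega)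
            calc dcoef (n + 1) (k + 1) * (k + 1).factorial
                = dcoef n k * (k + 1).factorial + n * dcoef n (k + 1) * (k + 1).factorial := by
                  rw [dcoef_succ_succ, Nat.add_mul]
              _ ≤ (n + 1) * (n.factorial * n.choose k) +
                    (n + 1) * (n.factorial * n.choose (k + 1)) := Nat.add_le_add h1 h2
              _ = (n + 1).factorial * (n.choose k + n.choose (k + 1)) := by
                  rw [Nat.factorial_succ]; ring
              _ = (n + 1).factorial * ((n + 1).choose (k + 1)) := by
                  rw [Nat.choose_succ_succ]
          · rw [dcoef_eq_zero (n + 1) (k + 1) hk]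
            simp

/-- Key combinatorial estimate: `∑ₖ |s(n,k)| k! xᵏ yⁿ⁻ᵏ ≤ n! (x+y)ⁿ`. -/
lemma dcoef_sum_le (x y : ℝ) (hx : 0 ≤ x) (hy : 0 ≤ y) (n : ℕ) :
    ∑ k ∈ Finset.range (n + 1), (dcoef n k : ℝ) * k.factorial * (x ^ k * y ^ (n - k)) ≤
      (n.factorial : ℝ) * (x + y) ^ n := by
  calc ∑ k ∈ Finset.range (n + 1), (dcoef n k : ℝ) * k.factorial * (x ^ k * y ^ (n - k))
      ≤ ∑ k ∈ Finset.range (n + 1),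
          (n.factorial : ℝ) * n.choose k * (x ^ k * y ^ (n - k)) := by
        refine Finset.sum_le_sum fun k _ => ?_
        refine mul_le_mul_of_nonneg_right ?_ (by positivity)
        have := dcoef_mul_factorial_le n k
        exact_mod_cast this
    _ = (n.factorial : ℝ) * ∑ k ∈ Finset.range (n + 1),
          x ^ k * y ^ (n - k) * (n.choose k : ℝ) := by
        rw [Finset.mul_sum]
        exact Finset.sum_congr rfl fun k _ => by ring
    _ = (n.factorial : ℝ) * (x + y) ^ n := by rw [← add_pow]

/-! ### Analytic lemmas -/

lemma contDiffOn_iteratedDeriv_top {f : ℝ → ℝ} {U : Set ℝ} (hU : IsOpen U)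
    (hf : ContDiffOn ℝ (⊤ : ℕ∞) f U) (n : ℕ) : ContDiffOn ℝ (⊤ : ℕ∞) (iteratedDeriv n f) U := by
  induction n with
  | zero => simpa [iteratedDeriv_zero] using hf
  | succ n ih =>
      rw [iteratedDeriv_succ]
      exact ih.deriv_of_isOpen hU (le_of_eq rfl)

lemma hasDerivAt_iteratedDeriv {f : ℝ → ℝ} {U : Set ℝ} (hU : IsOpen U)
    (hf : ContDiffOn ℝ (⊤ : ℕ∞) f U) {x : ℝ} (hx : x ∈ U) (n : ℕ) :
    HasDerivAt (iteratedDeriv n f) (iteratedDeriv (n + 1) f x) x := by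
  have h1 : DifferentiableOn ℝ (iteratedDeriv n f) U :=
    (contDiffOn_iteratedDeriv_top hU hf n).differentiableOn
      (by simp)
  have h2 := (h1.differentiableAt (hU.mem_nhds hx)).hasDerivAt
  rw [iteratedDeriv_succ]
  exact h2

/-- The key identity: `(e^ξ)^n f⁽ⁿ⁾(e^ξ) = ∑ₖ s(n,k) g⁽ᵏ⁾(ξ)` where `g = f ∘ exp`. -/
lemma key_identity {f g : ℝ → ℝ} {U : Set ℝ} (hU : IsOpen U)
    (hf : ContDiffOn ℝ (⊤ : ℕ∞) f U) (hg : ∀ ξ : ℝ, g ξ = f (Real.exp ξ)) :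
    ∀ (n : ℕ) (ξ : ℝ), Real.exp ξ ∈ U →
      Real.exp ξ ^ n * iteratedDeriv n f (Real.exp ξ) =
        ∑ k ∈ Finset.range (n + 1), scoef n k * iteratedDeriv k g ξ := by
  have hV : IsOpen (Real.exp ⁻¹' U) := hU.preimage Real.continuous_exp
  have hgC : ContDiffOn ℝ (⊤ : ℕ∞) g (Real.exp ⁻¹' U) := by
    have hgf : g = f ∘ Real.exp := funext hg
    rw [hgf]
    exact hf.comp Real.contDiff_exp.contDiffOn (Set.mapsTo_preimage _ _)
  intro n
  induction n with
  | zero =>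
      intro ξ hξ
      simp [iteratedDeriv_zero, hg ξ]
  | succ n ih =>
      intro ξ hξ
      -- derivative of the left-hand side
      have hpow : HasDerivAt (fun t : ℝ => Real.exp t ^ n) (Real.exp ξ ^ n * (n : ℝ)) ξ := by
        have h1 : HasDerivAt (fun t : ℝ => (n : ℝ) * t) ((n : ℝ) * 1) ξ :=
          (hasDerivAt_id ξ).const_mul _
        have h2 := h1.exp
        simp only [Real.exp_nat_mul, mul_one] at h2
        exact h2
      have hFn : HasDerivAt (iteratedDeriv n f) (iteratedDeriv (n + 1) f (Real.exp ξ))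
          (Real.exp ξ) := hasDerivAt_iteratedDeriv hU hf hξ n
      have hcomp : HasDerivAt (fun t : ℝ => iteratedDeriv n f (Real.exp t))
          (iteratedDeriv (n + 1) f (Real.exp ξ) * Real.exp ξ) ξ :=
        hFn.comp ξ (Real.hasDerivAt_exp ξ)
      have hφ : HasDerivAt (fun t : ℝ => Real.exp t ^ n * iteratedDeriv n f (Real.exp t))
          (Real.exp ξ ^ n * (n : ℝ) * iteratedDeriv n f (Real.exp ξ) +
            Real.exp ξ ^ n * (iteratedDeriv (n + 1) f (Real.exp ξ) * Real.exp ξ)) ξ :=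
        hpow.mul hcomp
      -- derivative of the right-hand side
      have hψ : HasDerivAt
          (fun t : ℝ => ∑ k ∈ Finset.range (n + 1), scoef n k * iteratedDeriv k g t)
          (∑ k ∈ Finset.range (n + 1), scoef n k * iteratedDeriv (k + 1) g ξ) ξ := by
        refine HasDerivAt.fun_sum fun k _ => ?_
        exact (hasDerivAt_iteratedDeriv hV hgC hξ k).const_mul _
      -- the two functions agree near ξ
      have heq : (fun t : ℝ => Real.exp t ^ n * iteratedDeriv n f (Real.exp t)) =ᶠ[nhds ξ]
          (fun t : ℝ => ∑ k ∈ Finset.range (n + 1), scoef n k * iteratedDeriv k g t) :=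
        Filter.eventuallyEq_of_mem (hV.mem_nhds hξ) fun t ht => ih t ht
      have hφ' : HasDerivAt (fun t : ℝ => Real.exp t ^ n * iteratedDeriv n f (Real.exp t))
          (∑ k ∈ Finset.range (n + 1), scoef n k * iteratedDeriv (k + 1) g ξ) ξ :=
        hψ.congr_of_eventuallyEq heq
      have hval : ∑ k ∈ Finset.range (n + 1), scoef n k * iteratedDeriv (k + 1) g ξ =
          Real.exp ξ ^ n * (n : ℝ) * iteratedDeriv n f (Real.exp ξ) +
            Real.exp ξ ^ n * (iteratedDeriv (n + 1) f (Real.exp ξ) * Real.exp ξ) :=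
        hφ'.unique hφ
      have e3 : ∑ k ∈ Finset.range (n + 1), scoef n (k + 1) * iteratedDeriv (k + 1) g ξ +
          scoef n 0 * iteratedDeriv 0 g ξ = Real.exp ξ ^ n * iteratedDeriv n f (Real.exp ξ) := by
        rw [← Finset.sum_range_succ' (fun k => scoef n k * iteratedDeriv k g ξ) (n + 1),
          Finset.sum_range_succ, scoef_eq_zero n (n + 1) (by omega), zero_mul, add_zero]
        exact (ih ξ hξ).symm
      have expand : ∑ k ∈ Finset.range (n + 2), scoef (n + 1) k * iteratedDeriv k g ξ =
          (∑ k ∈ Finset.range (n + 1), scoef n k * iteratedDeriv (k + 1) g ξ) -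
            (n : ℝ) * (∑ k ∈ Finset.range (n + 1), scoef n (k + 1) * iteratedDeriv (k + 1) g ξ +
              scoef n 0 * iteratedDeriv 0 g ξ) := by
        rw [Finset.sum_range_succ' (fun k => scoef (n + 1) k * iteratedDeriv k g ξ) (n + 1)]
        simp only [scoef_succ_succ, scoef_succ_zero, sub_mul]
        rw [Finset.sum_sub_distrib]
        simp only [mul_assoc]
        rw [← Finset.mul_sum]
        ring
      rw [expand, e3, hval]
      ring

/-! ### Main theorem -/

/-- (`B_{1/η}(M,N;[0,a]) ⊆ C₁(M,N;[0,a])`, non-analytic case.)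
If `f` is smooth near `[0,a]` with `|f⁽ⁿ⁾| ≤ C^{n+1} M_n` on `[0,a]` and the exponential
change of variable `g ξ = f (e^ξ)` satisfies `|g⁽ⁿ⁾(ξ)| ≤ C (1/η)ⁿ N_n` for `ξ ≤ log a`,
then `xⁿ|f⁽ⁿ⁾(x)| ≤ C' N_n` on `(0,a]`. -/
theorem stmt_4
    (M N : ℕ → ℝ) (hM : RegularSeq M) (hN : RegularSeq N)
    (hτ : Filter.Tendsto (fun n : ℕ => (N n / (n.factorial : ℝ)) ^ ((1 : ℝ) / (n : ℝ)))
      Filter.atTop Filter.atTop)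
    (a : ℝ) (ha : 0 < a) (η : ℝ) (hη : 1 < η)
    (f : ℝ → ℝ) (U : Set ℝ) (hU : IsOpen U) (hUa : Set.Icc (0 : ℝ) a ⊆ U)
    (hf : ContDiffOn ℝ (⊤ : ℕ∞) f U)
    (g : ℝ → ℝ) (hg : ∀ ξ : ℝ, g ξ = f (Real.exp ξ))
    (C : ℝ) (hC : 0 < C)
    (hbd1 : ∀ x ∈ Set.Icc (0 : ℝ) a, ∀ n : ℕ, |iteratedDeriv n f x| ≤ C ^ (n + 1) * M n)
    (hbd2 : ∀ ξ : ℝ, ξ ≤ Real.log a → ∀ n : ℕ,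
        |iteratedDeriv n g ξ| ≤ C * (1 / η) ^ n * N n) :
    ∃ C' : ℝ, 0 < C' ∧ ∀ x ∈ Set.Ioc (0 : ℝ) a, ∀ n : ℕ,
      x ^ n * |iteratedDeriv n f x| ≤ C' * N n := by
  obtain ⟨hNpos, -, ⟨n₁, hmono⟩, -⟩ := hN
  obtain ⟨hMpos, -⟩ := hM
  set m : ℕ → ℝ := fun n => N n / (n.factorial : ℝ) with hm_def
  have hmpos : ∀ n, 0 < m n := fun n => div_pos (hNpos n) (by positivity)
  -- choose δ with 1/η + δ < 1
  set δ : ℝ := (1 - 1 / η) / 2 with hδ_def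
  have hη0 : 0 < η := lt_trans one_pos hη
  have hη1 : 1 / η < 1 := by rw [div_lt_one hη0]; exact hη
  have hδ : 0 < δ := by rw [hδ_def]; linarith
  have hδη : 1 / η + δ < 1 := by rw [hδ_def]; linarith
  -- eventual lower bound on m n ^ (1/n)
  have hev : ∀ᶠ n in Filter.atTop, max 1 δ⁻¹ ≤ m n ^ ((1 : ℝ) / (n : ℝ)) :=
    hτ.eventually_ge_atTop _
  obtain ⟨n₃, hn₃⟩ := Filter.eventually_atTop.1 hev
  set n₂ : ℕ := n₁ + n₃ + 1 with hn₂_def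
  -- monotone chain for m k ^ (1/k)
  have chain : ∀ k n : ℕ, max n₁ 1 ≤ k → k ≤ n →
      m k ^ ((1 : ℝ) / (k : ℝ)) ≤ m n ^ ((1 : ℝ) / (n : ℝ)) := by
    intro k n hk hkn
    induction n, hkn using Nat.le_induction with
    | base => exact le_rfl
    | succ n hkn ih =>
        refine ih.trans ?_
        have h1 : n₁ ≤ n := le_trans (le_trans (le_max_left _ _) hk) hkn
        have h2 : 1 ≤ n := le_trans (le_trans (le_max_right _ _) hk) hkn
        have := hmono n h1 h2
        rw [hm_def]
        convert this using 3
        push_cast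
        · rfl
        · norm_num
  -- the constant B
  set B : ℝ := max 1 (∑ j ∈ Finset.range n₂, m j) with hB_def
  have hB1 : 1 ≤ B := le_max_left _ _
  have hB0 : 0 < B := lt_of_lt_of_le one_pos hB1
  -- the constant for small n
  set C₀ : ℝ := ∑ j ∈ Finset.range n₂, (max a 1) ^ j * C ^ (j + 1) * M j / N j with hC₀_def
  have hC₀0 : 0 ≤ C₀ := by
    refine Finset.sum_nonneg fun j _ => ?_
    have := hMpos j
    have := hNpos j
    have ha1 : (0 : ℝ) < max a 1 := lt_of_lt_of_le one_pos (le_max_right _ _)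
    positivity
  refine ⟨C * B + C₀, by positivity, ?_⟩
  intro x hx n
  obtain ⟨hx0, hxa⟩ := hx
  have hxU : x ∈ U := hUa ⟨hx0.le, hxa⟩
  rcases lt_or_ge n n₂ with hn | hn
  · -- small n : use hbd1
    have h1 : x ^ n * |iteratedDeriv n f x| ≤ (max a 1) ^ n * (C ^ (n + 1) * M n) := by
      refine mul_le_mul ?_ (hbd1 x ⟨hx0.le, hxa⟩ n) (abs_nonneg _) (by positivity)
      exact pow_le_pow_left₀ hx0.le (le_trans hxa (le_max_left _ _)) n
    have h2 : (max a 1) ^ n * (C ^ (n + 1) * M n) ≤ C₀ * N n := by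
      have h3 : (max a 1) ^ n * (C ^ (n + 1) * M n) =
          ((max a 1) ^ n * C ^ (n + 1) * M n / N n) * N n := by
        rw [div_mul_cancel₀ _ (ne_of_gt (hNpos n))]; ring
      rw [h3]
      refine mul_le_mul_of_nonneg_right ?_ (hNpos n).le
      exact Finset.single_le_sum (f := fun j => (max a 1) ^ j * C ^ (j + 1) * M j / N j)
        (fun j _ => by
          have := hMpos j; have := hNpos j
          have ha1 : (0 : ℝ) < max a 1 := lt_of_lt_of_le one_pos (le_max_right _ _)
          positivity)
        (Finset.mem_range.2 hn)
    calc x ^ n * |iteratedDeriv n f x| ≤ C₀ * N n := h1.trans h2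
      _ ≤ (C * B + C₀) * N n := by
          refine mul_le_mul_of_nonneg_right ?_ (hNpos n).le
          nlinarith
  · -- large n : use the identity and hbd2
    have hn1 : 1 ≤ n := le_trans (by omega) hn
    have hnn : (n : ℝ) ≠ 0 := by positivity
    set s : ℝ := m n ^ ((1 : ℝ) / (n : ℝ)) with hs_def
    have hs_ge : max 1 δ⁻¹ ≤ s := hn₃ n (by omega)
    have hs1 : 1 ≤ s := le_trans (le_max_left _ _) hs_ge
    have hs0 : 0 < s := lt_of_lt_of_le one_pos hs1
    set ε : ℝ := s⁻¹ with hε_def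
    have hε0 : 0 < ε := by positivity
    have hεδ : ε ≤ δ := by
      rw [hε_def]
      have h := le_trans (le_max_right _ _) hs_ge
      calc s⁻¹ ≤ (δ⁻¹)⁻¹ := by
            apply inv_anti₀ (by positivity) h
        _ = δ := inv_inv δ
    have hsn : s ^ n = m n := by
      rw [hs_def, ← Real.rpow_natCast (m n ^ ((1 : ℝ) / (n : ℝ))) n,
        ← Real.rpow_mul (hmpos n).le, one_div_mul_cancel hnn, Real.rpow_one]
    -- m n * ε^(n-k) = s^k for k ≤ n
    have hsk : ∀ k : ℕ, k ≤ n → m n * ε ^ (n - k) = s ^ k := by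
      intro k hkn
      have h1 : s ^ k * s ^ (n - k) = s ^ n := by
        rw [← pow_add]; congr 1; omega
      rw [← hsn, ← h1, hε_def, inv_pow, mul_assoc,
        mul_inv_cancel₀ (by positivity : (s : ℝ) ^ (n - k) ≠ 0), mul_one]
    -- bound m k ≤ B * (m n * ε^(n-k)) for k ≤ n
    have hmk : ∀ k : ℕ, k ≤ n → m k ≤ B * (m n * ε ^ (n - k)) := by
      intro k hkn
      rw [hsk k hkn]
      by_cases hcase : n₁ ≤ k ∧ 1 ≤ k
      · have hknn : (k : ℝ) ≠ 0 := by
          have := hcase.2; positivity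
        have h1 : m k ^ ((1 : ℝ) / (k : ℝ)) ≤ s := chain k n (max_le hcase.1 hcase.2) hkn
        have h2 : (m k ^ ((1 : ℝ) / (k : ℝ))) ^ k = m k := by
          rw [← Real.rpow_natCast (m k ^ ((1 : ℝ) / (k : ℝ))) k,
            ← Real.rpow_mul (hmpos k).le, one_div_mul_cancel hknn, Real.rpow_one]
        calc m k = (m k ^ ((1 : ℝ) / (k : ℝ))) ^ k := h2.symm
          _ ≤ s ^ k := pow_le_pow_left₀ (Real.rpow_nonneg (hmpos k).le _) h1 k
          _ ≤ B * s ^ k := by nlinarith [pow_pos hs0 k]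
      · have hk2 : k < n₂ := by
          rw [hn₂_def]; omega
        have h1 : m k ≤ ∑ j ∈ Finset.range n₂, m j :=
          Finset.single_le_sum (fun j _ => (hmpos j).le) (Finset.mem_range.2 hk2)
        have h2 : (1 : ℝ) ≤ s ^ k := one_le_pow₀ hs1
        calc m k ≤ ∑ j ∈ Finset.range n₂, m j := h1
          _ ≤ B := le_max_right _ _
          _ = B * 1 := (mul_one B).symm
          _ ≤ B * s ^ k := by nlinarith
    -- the identity
    have hex : Real.exp (Real.log x) = x := Real.exp_log hx0
    have hkey := key_identity hU hf hg n (Real.log x) (by rw [hex]; exact hxU)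
    rw [hex] at hkey
    have hlog : Real.log x ≤ Real.log a := (Real.log_le_log_iff hx0 ha).2 hxa
    -- estimate the sum
    have habs : x ^ n * |iteratedDeriv n f x| = |x ^ n * iteratedDeriv n f x| := by
      rw [abs_mul, abs_of_nonneg (pow_nonneg hx0.le n)]
    have hstep1 : |x ^ n * iteratedDeriv n f x| ≤
        ∑ k ∈ Finset.range (n + 1),
          C * B * m n * ((dcoef n k : ℝ) * k.factorial * ((1 / η) ^ k * ε ^ (n - k))) := by
      rw [hkey]
      refine (Finset.abs_sum_le_sum_abs _ _).trans (Finset.sum_le_sum fun k hk => ?_)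
      have hkn : k ≤ n := by
        have := Finset.mem_range.1 hk; omega
      rw [abs_mul]
      have h1 : |scoef n k| ≤ (dcoef n k : ℝ) := abs_scoef_le n k
      have h2 : |iteratedDeriv k g (Real.log x)| ≤ C * (1 / η) ^ k * N k :=
        hbd2 (Real.log x) hlog k
      have hNk : N k = (k.factorial : ℝ) * m k := by
        rw [hm_def]
        field_simp
      have h3 : N k ≤ (k.factorial : ℝ) * (B * (m n * ε ^ (n - k))) := by
        rw [hNk]
        exact mul_le_mul_of_nonneg_left (hmk k hkn) (by positivity)
      have h4 : |iteratedDeriv k g (Real.log x)| ≤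
          C * (1 / η) ^ k * ((k.factorial : ℝ) * (B * (m n * ε ^ (n - k)))) := by
        refine h2.trans ?_
        refine mul_le_mul_of_nonneg_left h3 ?_
        positivity
      calc |scoef n k| * |iteratedDeriv k g (Real.log x)| ≤
          (dcoef n k : ℝ) * (C * (1 / η) ^ k * ((k.factorial : ℝ) * (B * (m n * ε ^ (n - k))))) :=
            mul_le_mul h1 h4 (abs_nonneg _) (Nat.cast_nonneg _)
        _ = C * B * m n * ((dcoef n k : ℝ) * k.factorial * ((1 / η) ^ k * ε ^ (n - k))) := by
            ring
    have hstep2 : ∑ k ∈ Finset.range (n + 1),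
        C * B * m n * ((dcoef n k : ℝ) * k.factorial * ((1 / η) ^ k * ε ^ (n - k))) ≤
        C * B * m n * ((n.factorial : ℝ) * (1 / η + ε) ^ n) := by
      rw [← Finset.mul_sum]
      refine mul_le_mul_of_nonneg_left ?_
        (mul_nonneg (mul_nonneg hC.le hB0.le) (hmpos n).le)
      exact dcoef_sum_le (1 / η) ε (by positivity) hε0.le n
    have hstep3 : C * B * m n * ((n.factorial : ℝ) * (1 / η + ε) ^ n) ≤ C * B * N n := by
      have h1 : (1 / η + ε) ^ n ≤ 1 :=
        pow_le_one₀ (by positivity) (by linarith)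
      have h2 : m n * (n.factorial : ℝ) = N n := by
        rw [hm_def]
        field_simp
      calc C * B * m n * ((n.factorial : ℝ) * (1 / η + ε) ^ n) ≤
          C * B * m n * ((n.factorial : ℝ) * 1) := by
            refine mul_le_mul_of_nonneg_left ?_
              (mul_nonneg (mul_nonneg hC.le hB0.le) (hmpos n).le)
            exact mul_le_mul_of_nonneg_left h1 (by positivity)
        _ = C * B * (m n * (n.factorial : ℝ)) := by ring
        _ = C * B * N n := by rw [h2]
    calc x ^ n * |iteratedDeriv n f x| = |x ^ n * iteratedDeriv n f x| := habs
      _ ≤ C * B * N n := (hstep1.trans hstep2).trans hstep3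
      _ ≤ (C * B + C₀) * N n := by
          refine mul_le_mul_of_nonneg_right ?_ (hNpos n).le
          linarith
end

section
/- Let m : ℕ → ℝ be a sequence of positive reals with m_1 ≥ 1, with m_n^{1/n} ≤ m_{n+1}^{1/(n+1)} for all n ≥ 1, and suppose there exists C ≥ 1 with m_{n+1} ≤ C·m_n^{1+1/n} for all n ≥ 1. Then there exists C₂ > 0 such that 1 ≤ m_k^{1/k} ≤ m_1·k^{C₂} for all k ≥ 2. -/
open Finset in
private lemma stmt6_harmonic (k : ℕ) (hk : 2 ≤ k) :
    ∑ j ∈ Finset.Icc 2 k, (1 : ℝ) / j ≤ Real.log k := by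
  induction k with
  | zero => omega
  | succ n ih =>
    rcases Nat.lt_or_ge n 2 with hn | hn
    · interval_cases n
      · omega
      · simp only [Finset.Icc_self, Finset.sum_singleton]
        norm_num
        have := Real.log_two_gt_d9
        linarith
    · have hn0 : (0:ℝ) < n := by positivity
      rw [Finset.sum_Icc_succ_top (by omega)]
      have h1 : Real.log ((n : ℝ) / (n + 1)) ≤ (n : ℝ) / (n + 1) - 1 :=
        Real.log_le_sub_one_of_pos (by positivity)
      rw [Real.log_div (by positivity) (by positivity)] at h1
      have h2 : (n : ℝ) / (n + 1) - 1 = -(1 / (n + 1)) := by field_simp; ring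
      have := ih hn
      push_cast
      rw [h2] at h1
      linarith

private lemma stmt6_upper (m : ℕ → ℝ) (hpos : ∀ n, 0 < m n)
    (C : ℝ) (hC : 1 ≤ C)
    (hrat : ∀ n : ℕ, 1 ≤ n → m (n + 1) ≤ C * m n ^ ((1 : ℝ) + 1 / (n : ℝ))) :
    ∀ k : ℕ, 1 ≤ k → m k ^ ((1 : ℝ) / (k : ℝ)) ≤
      m 1 * C ^ (∑ j ∈ Finset.Icc 2 k, (1 : ℝ) / j) := by
  intro k hk
  induction k with
  | zero => omega
  | succ n ih =>
    rcases Nat.lt_or_ge n 1 with hn | hn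
    · interval_cases n
      simp [(hpos 1).le]
    · have hn0 : (0:ℝ) < n := by positivity
      have hC0 : (0:ℝ) < C := by linarith
      have step : m (n + 1) ^ ((1 : ℝ) / ((n:ℝ) + 1)) ≤
          C ^ ((1:ℝ) / ((n:ℝ)+1)) * m n ^ ((1:ℝ) / (n:ℝ)) := by
        have h1 : m (n + 1) ^ ((1 : ℝ) / ((n:ℝ) + 1)) ≤
            (C * m n ^ ((1 : ℝ) + 1 / (n : ℝ))) ^ ((1:ℝ) / ((n:ℝ)+1)) :=
          Real.rpow_le_rpow (hpos _).le (hrat n hn) (by positivity)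
        rw [Real.mul_rpow hC0.le (Real.rpow_nonneg (hpos n).le _),
          ← Real.rpow_mul (hpos n).le] at h1
        calc m (n + 1) ^ ((1 : ℝ) / ((n:ℝ) + 1)) ≤ _ := h1
          _ = C ^ ((1:ℝ) / ((n:ℝ)+1)) * m n ^ ((1:ℝ) / (n:ℝ)) := by
            congr 2
            field_simp
      have := ih hn
      push_cast
      calc m (n + 1) ^ ((1 : ℝ) / ((n:ℝ) + 1))
          ≤ C ^ ((1:ℝ) / ((n:ℝ)+1)) * m n ^ ((1:ℝ) / (n:ℝ)) := step
        _ ≤ C ^ ((1:ℝ) / ((n:ℝ)+1)) * (m 1 * C ^ (∑ j ∈ Finset.Icc 2 n, (1 : ℝ) / j)) := by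
            apply mul_le_mul_of_nonneg_left this (by positivity)
        _ = m 1 * C ^ (∑ j ∈ Finset.Icc 2 (n+1), (1 : ℝ) / j) := by
            rw [Finset.sum_Icc_succ_top (by omega), Real.rpow_add hC0]
            push_cast
            ring

/-- (First assertion of the claim on regular `m`.)
For a positive sequence `m` with `m 1 ≥ 1`, `(m n)^{1/n}` non-decreasing and
`m (n+1) ≤ C · (m n)^{1+1/n}`, one has `1 ≤ m k^{1/k} ≤ m 1 · k^{C₂}` for all `k ≥ 2`. -/
theorem stmt_6
    (m : ℕ → ℝ) (hpos : ∀ n, 0 < m n) (hm1 : 1 ≤ m 1)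
    (hmono : ∀ n : ℕ, 1 ≤ n →
      m n ^ ((1 : ℝ) / (n : ℝ)) ≤ m (n + 1) ^ ((1 : ℝ) / ((n : ℝ) + 1)))
    (C : ℝ) (hC : 1 ≤ C)
    (hrat : ∀ n : ℕ, 1 ≤ n → m (n + 1) ≤ C * m n ^ ((1 : ℝ) + 1 / (n : ℝ))) :
    ∃ C₂ : ℝ, 0 < C₂ ∧ ∀ k : ℕ, 2 ≤ k →
      1 ≤ m k ^ ((1 : ℝ) / (k : ℝ)) ∧
      m k ^ ((1 : ℝ) / (k : ℝ)) ≤ m 1 * (k : ℝ) ^ C₂ := by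
  have hlogC : 0 ≤ Real.log C := Real.log_nonneg hC
  refine ⟨Real.log C + 1, by linarith, ?_⟩
  have hlow : ∀ k : ℕ, 1 ≤ k → m 1 ≤ m k ^ ((1 : ℝ) / (k : ℝ)) := by
    intro k hk
    induction k with
    | zero => omega
    | succ n ih =>
      rcases Nat.lt_or_ge n 1 with hn | hn
      · interval_cases n; simp
      · have := hmono n hn
        push_cast
        exact le_trans (ih hn) this
  intro k hk
  have hk1 : (1:ℝ) ≤ (k:ℝ) := by exact_mod_cast Nat.one_le_of_lt hk
  have hk0 : (0:ℝ) < (k:ℝ) := by linarith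
  constructor
  · exact le_trans hm1 (hlow k (by omega))
  · calc m k ^ ((1 : ℝ) / (k : ℝ))
        ≤ m 1 * C ^ (∑ j ∈ Finset.Icc 2 k, (1 : ℝ) / j) :=
          stmt6_upper m hpos C hC hrat k (by omega)
      _ ≤ m 1 * C ^ (Real.log k) := by
          apply mul_le_mul_of_nonneg_left _ (by linarith)
          exact Real.rpow_le_rpow_of_exponent_le hC (stmt6_harmonic k hk)
      _ = m 1 * (k:ℝ) ^ (Real.log C) := by
          rw [Real.rpow_def_of_pos (by linarith : (0:ℝ) < C),
            Real.rpow_def_of_pos hk0, mul_comm (Real.log C)]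
      _ ≤ m 1 * (k:ℝ) ^ (Real.log C + 1) := by
          apply mul_le_mul_of_nonneg_left _ (by linarith)
          exact Real.rpow_le_rpow_of_exponent_le hk1 (by linarith)
end

section
/- Let m : ℕ → ℝ be a sequence of positive reals with m_n^{1/n} ≤ m_{n+1}^{1/(n+1)} for all n ≥ 1, and suppose there exists C ≥ 1 with m_{n+1} ≤ C·m_n^{1+1/n} for all n ≥ 1. Then for every C₁ > 1 there exists C₃ > 0 such that for all integers k ≥ 1 and all integers n with k ≤ n ≤ C₁·k one has m_k^{1/k} ≤ m_n^{1/n} ≤ C₃·m_k^{1/k}. -/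
/-- (Second assertion of the claim on regular `m`.)
For a positive sequence `m` with `(m n)^{1/n}` non-decreasing and
`m (n+1) ≤ C · (m n)^{1+1/n}`: for every `C₁ > 1` there is `C₃ > 0` such that
`m k^{1/k} ≤ m n^{1/n} ≤ C₃ · m k^{1/k}` whenever `1 ≤ k ≤ n ≤ C₁·k`. -/
theorem stmt_7
    (m : ℕ → ℝ) (hpos : ∀ n, 0 < m n)
    (hmono : ∀ n : ℕ, 1 ≤ n →
      m n ^ ((1 : ℝ) / (n : ℝ)) ≤ m (n + 1) ^ ((1 : ℝ) / ((n : ℝ) + 1)))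
    (C : ℝ) (hC : 1 ≤ C)
    (hrat : ∀ n : ℕ, 1 ≤ n → m (n + 1) ≤ C * m n ^ ((1 : ℝ) + 1 / (n : ℝ))) :
    ∀ C₁ : ℝ, 1 < C₁ → ∃ C₃ : ℝ, 0 < C₃ ∧
      ∀ k n : ℕ, 1 ≤ k → k ≤ n → (n : ℝ) ≤ C₁ * (k : ℝ) →
        m k ^ ((1 : ℝ) / (k : ℝ)) ≤ m n ^ ((1 : ℝ) / (n : ℝ)) ∧
        m n ^ ((1 : ℝ) / (n : ℝ)) ≤ C₃ * m k ^ ((1 : ℝ) / (k : ℝ)) := by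
  intro C₁ hC₁
  have hC0 : (0:ℝ) < C := lt_of_lt_of_le one_pos hC
  refine ⟨C ^ (C₁ - 1), Real.rpow_pos_of_pos hC0 _, ?_⟩
  -- single-step upper bound
  have hstep : ∀ n : ℕ, 1 ≤ n →
      m (n+1) ^ ((1:ℝ)/((n:ℝ)+1)) ≤ C ^ ((1:ℝ)/((n:ℝ)+1)) * m n ^ ((1:ℝ)/(n:ℝ)) := by
    intro n hn
    have hn' : (0:ℝ) < n := by exact_mod_cast hn
    have h1 : m (n+1) ^ ((1:ℝ)/((n:ℝ)+1))
        ≤ (C * m n ^ ((1:ℝ) + 1/(n:ℝ))) ^ ((1:ℝ)/((n:ℝ)+1)) :=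
      Real.rpow_le_rpow (hpos _).le (hrat n hn) (by positivity)
    rw [Real.mul_rpow hC0.le (Real.rpow_nonneg (hpos n).le _), ← Real.rpow_mul (hpos n).le] at h1
    have he : ((1:ℝ) + 1/(n:ℝ)) * ((1:ℝ)/((n:ℝ)+1)) = 1/(n:ℝ) := by
      field_simp
    rwa [he] at h1
  -- monotonicity
  have hmono' : ∀ k n : ℕ, 1 ≤ k → k ≤ n →
      m k ^ ((1:ℝ)/(k:ℝ)) ≤ m n ^ ((1:ℝ)/(n:ℝ)) := by
    intro k n hk hkn
    induction n, hkn using Nat.le_induction with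
    | base => exact le_refl _
    | succ n hn ih =>
        refine ih.trans ?_
        have := hmono n (le_trans hk hn)
        push_cast
        exact_mod_cast this
  -- iterated upper bound
  have hup : ∀ k : ℕ, 1 ≤ k → ∀ d : ℕ,
      m (k+d) ^ ((1:ℝ)/((k:ℝ)+(d:ℝ))) ≤ C ^ ((d:ℝ)/((k:ℝ)+1)) * m k ^ ((1:ℝ)/(k:ℝ)) := by
    intro k hk d
    induction d with
    | zero => simp
    | succ d ih =>
        have hkd : 1 ≤ k + d := le_trans hk (Nat.le_add_right _ _)
        have h1 := hstep (k+d) hkd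
        have hcast : ((k+d : ℕ) : ℝ) = (k:ℝ) + (d:ℝ) := by push_cast; ring
        rw [hcast] at h1
        have h2 : C ^ ((1:ℝ)/((k:ℝ)+(d:ℝ)+1)) ≤ C ^ ((1:ℝ)/((k:ℝ)+1)) := by
          apply Real.rpow_le_rpow_of_exponent_le hC
          apply div_le_div_of_nonneg_left one_pos.le (by positivity)
          have : (0:ℝ) ≤ (d:ℝ) := Nat.cast_nonneg d
          linarith
        have hpos' : (0:ℝ) < m (k+d) ^ ((1:ℝ)/((k:ℝ)+(d:ℝ))) :=
          Real.rpow_pos_of_pos (hpos _) _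
        push_cast
        calc m (k+(d+1)) ^ ((1:ℝ)/((k:ℝ)+((d:ℝ)+1)))
            = m ((k+d)+1) ^ ((1:ℝ)/(((k:ℝ)+(d:ℝ))+1)) := by
              push_cast; ring_nf
          _ ≤ C ^ ((1:ℝ)/((k:ℝ)+(d:ℝ)+1)) * m (k+d) ^ ((1:ℝ)/((k:ℝ)+(d:ℝ))) := h1
          _ ≤ C ^ ((1:ℝ)/((k:ℝ)+1)) * m (k+d) ^ ((1:ℝ)/((k:ℝ)+(d:ℝ))) := by
              exact mul_le_mul_of_nonneg_right h2 hpos'.le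
          _ ≤ C ^ ((1:ℝ)/((k:ℝ)+1)) * (C ^ ((d:ℝ)/((k:ℝ)+1)) * m k ^ ((1:ℝ)/(k:ℝ))) := by
              apply mul_le_mul_of_nonneg_left ih (Real.rpow_nonneg hC0.le _)
          _ = C ^ (((d:ℝ)+1)/((k:ℝ)+1)) * m k ^ ((1:ℝ)/(k:ℝ)) := by
              rw [← mul_assoc, ← Real.rpow_add hC0]
              ring_nf
  intro k n hk hkn hnk
  refine ⟨hmono' k n hk hkn, ?_⟩
  obtain ⟨d, rfl⟩ := Nat.exists_eq_add_of_le hkn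
  have hk' : (1:ℝ) ≤ (k:ℝ) := by exact_mod_cast hk
  have hd : ((d:ℝ))/((k:ℝ)+1) ≤ C₁ - 1 := by
    rw [div_le_iff₀ (by linarith)]
    have : (k:ℝ) + (d:ℝ) ≤ C₁ * (k:ℝ) := by push_cast at hnk ⊢; linarith
    nlinarith
  have h3 : C ^ ((d:ℝ)/((k:ℝ)+1)) ≤ C ^ (C₁ - 1) :=
    Real.rpow_le_rpow_of_exponent_le hC hd
  have h4 := hup k hk d
  have hcast : ((k+d : ℕ) : ℝ) = (k:ℝ) + (d:ℝ) := by push_cast; ring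
  rw [hcast]
  refine h4.trans ?_
  exact mul_le_mul_of_nonneg_right h3 (Real.rpow_pos_of_pos (hpos k) _).le
end

section
/- Let m : ℕ → ℝ be a sequence of positive reals with m_n^{1/n} ≤ m_{n+1}^{1/(n+1)} for all n ≥ 1, and suppose there exists C ≥ 1 with m_{n+1} ≤ C·m_n^{1+1/n} for all n ≥ 1. Then there exists C₄ > 0 such that m_k^{n/k} ≤ C₄^{k+n}·m_n for all integers n, k ≥ 1. -/
open Real

private lemma stmt8_mono (m : ℕ → ℝ) (hpos : ∀ n, 0 < m n)
    (hmono : ∀ n : ℕ, 1 ≤ n →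
      m n ^ ((1 : ℝ) / (n : ℝ)) ≤ m (n + 1) ^ ((1 : ℝ) / ((n : ℝ) + 1)))
    (n k : ℕ) (hn : 1 ≤ n) (hk : n ≤ k) :
    m n ^ ((1 : ℝ) / (n : ℝ)) ≤ m k ^ ((1 : ℝ) / (k : ℝ)) := by
  induction k, hk using Nat.le_induction with
  | base => exact le_refl _
  | succ k hk ih =>
    refine ih.trans ?_
    have := hmono k (hn.trans hk)
    push_cast at this ⊢
    convert this using 3 <;> push_cast <;> ring

private lemma stmt8_step (m : ℕ → ℝ) (hpos : ∀ n, 0 < m n)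
    (C : ℝ) (hC : 1 ≤ C)
    (hrat : ∀ n : ℕ, 1 ≤ n → m (n + 1) ≤ C * m n ^ ((1 : ℝ) + 1 / (n : ℝ)))
    (k : ℕ) (hk : 1 ≤ k) :
    m (k + 1) ^ ((1 : ℝ) / ((k : ℝ) + 1)) ≤
      C ^ ((1 : ℝ) / ((k : ℝ) + 1)) * m k ^ ((1 : ℝ) / (k : ℝ)) := by
  have hkR : (0:ℝ) < (k:ℝ) := by exact_mod_cast hk
  have hC0 : (0:ℝ) < C := lt_of_lt_of_le one_pos hC
  have h1 : m (k + 1) ^ ((1 : ℝ) / ((k : ℝ) + 1)) ≤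
      (C * m k ^ ((1 : ℝ) + 1 / (k : ℝ))) ^ ((1 : ℝ) / ((k : ℝ) + 1)) := by
    apply Real.rpow_le_rpow (hpos _).le (hrat k hk)
    positivity
  refine h1.trans_eq ?_
  rw [Real.mul_rpow hC0.le (Real.rpow_nonneg (hpos k).le _),
    ← Real.rpow_mul (hpos k).le]
  congr 2
  field_simp

private lemma stmt8_bound (m : ℕ → ℝ) (hpos : ∀ n, 0 < m n)
    (C : ℝ) (hC : 1 ≤ C)
    (hrat : ∀ n : ℕ, 1 ≤ n → m (n + 1) ≤ C * m n ^ ((1 : ℝ) + 1 / (n : ℝ)))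
    (n k : ℕ) (hn : 1 ≤ n) (hk : n ≤ k) :
    m k ^ ((1 : ℝ) / (k : ℝ)) ≤
      C ^ (((k : ℝ) - (n : ℝ)) / (n : ℝ)) * m n ^ ((1 : ℝ) / (n : ℝ)) := by
  have hC0 : (0:ℝ) < C := lt_of_lt_of_le one_pos hC
  have hnR : (0:ℝ) < (n:ℝ) := by exact_mod_cast hn
  induction k, hk using Nat.le_induction with
  | base => simp
  | succ k hk ih =>
    have hk1 : 1 ≤ k := hn.trans hk
    have h1 := stmt8_step m hpos C hC hrat k hk1
    push_cast
    calc m (k + 1) ^ ((1 : ℝ) / ((k : ℝ) + 1))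
        ≤ C ^ ((1 : ℝ) / ((k : ℝ) + 1)) * m k ^ ((1 : ℝ) / (k : ℝ)) := h1
      _ ≤ C ^ ((1 : ℝ) / ((k : ℝ) + 1)) *
          (C ^ (((k : ℝ) - (n : ℝ)) / (n : ℝ)) * m n ^ ((1 : ℝ) / (n : ℝ))) := by
          apply mul_le_mul_of_nonneg_left ih (Real.rpow_nonneg hC0.le _)
      _ ≤ C ^ (((k : ℝ) + 1 - (n : ℝ)) / (n : ℝ)) * m n ^ ((1 : ℝ) / (n : ℝ)) := by
          rw [← mul_assoc, ← Real.rpow_add hC0]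
          apply mul_le_mul_of_nonneg_right _ (Real.rpow_nonneg (hpos n).le _)
          apply Real.rpow_le_rpow_of_exponent_le hC
          have hkn : (n:ℝ) ≤ (k:ℝ) + 1 := by
            have : (n:ℝ) ≤ (k:ℝ) := by exact_mod_cast hk
            linarith
          have h2 : (1:ℝ) / ((k:ℝ)+1) ≤ 1 / (n:ℝ) := by
            apply one_div_le_one_div_of_le hnR hkn
          have : ((k : ℝ) + 1 - (n : ℝ)) / (n : ℝ)
              = ((k : ℝ) - (n : ℝ)) / (n : ℝ) + 1 / (n:ℝ) := by ring
          linarith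

/-- (Third assertion of the claim on regular `m`.)
For a positive sequence `m` with `(m n)^{1/n}` non-decreasing and
`m (n+1) ≤ C · (m n)^{1+1/n}`, there is `C₄ > 0` with
`m k^{n/k} ≤ C₄^{k+n} · m n` for all `n, k ≥ 1`. -/
theorem stmt_8
    (m : ℕ → ℝ) (hpos : ∀ n, 0 < m n)
    (hmono : ∀ n : ℕ, 1 ≤ n →
      m n ^ ((1 : ℝ) / (n : ℝ)) ≤ m (n + 1) ^ ((1 : ℝ) / ((n : ℝ) + 1)))
    (C : ℝ) (hC : 1 ≤ C)
    (hrat : ∀ n : ℕ, 1 ≤ n → m (n + 1) ≤ C * m n ^ ((1 : ℝ) + 1 / (n : ℝ))) :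
    ∃ C₄ : ℝ, 0 < C₄ ∧ ∀ n k : ℕ, 1 ≤ n → 1 ≤ k →
      m k ^ ((n : ℝ) / (k : ℝ)) ≤ C₄ ^ (k + n) * m n := by
  have hC0 : (0:ℝ) < C := lt_of_lt_of_le one_pos hC
  refine ⟨C, hC0, fun n k hn hk => ?_⟩
  have hkR : (0:ℝ) < (k:ℝ) := by exact_mod_cast hk
  have hnR : (0:ℝ) < (n:ℝ) := by exact_mod_cast hn
  have hsplit : m k ^ ((n : ℝ) / (k : ℝ)) = (m k ^ ((1:ℝ)/(k:ℝ))) ^ (n:ℝ) := by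
    rw [← Real.rpow_mul (hpos k).le]
    congr 1; field_simp
  rcases le_total k n with hkn | hnk
  · -- k ≤ n : monotonicity
    have h1 := stmt8_mono m hpos hmono k n hk hkn
    have : m k ^ ((n : ℝ) / (k : ℝ)) ≤ m n := by
      rw [hsplit]
      calc (m k ^ ((1:ℝ)/(k:ℝ))) ^ (n:ℝ)
          ≤ (m n ^ ((1:ℝ)/(n:ℝ))) ^ (n:ℝ) :=
            Real.rpow_le_rpow (Real.rpow_nonneg (hpos k).le _) h1 (by positivity)
        _ = m n := by
            rw [← Real.rpow_mul (hpos n).le]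
            field_simp
            rw [Real.rpow_one]
    refine this.trans ?_
    have : (1:ℝ) ≤ C ^ (k+n) := one_le_pow₀ hC
    nlinarith [hpos n]
  · -- n ≤ k
    have h1 := stmt8_bound m hpos C hC hrat n k hn hnk
    rw [hsplit]
    calc (m k ^ ((1:ℝ)/(k:ℝ))) ^ (n:ℝ)
        ≤ (C ^ (((k : ℝ) - (n : ℝ)) / (n : ℝ)) * m n ^ ((1:ℝ)/(n:ℝ))) ^ (n:ℝ) :=
          Real.rpow_le_rpow (Real.rpow_nonneg (hpos k).le _) h1 (by positivity)
      _ = C ^ ((k:ℝ) - (n:ℝ)) * m n := by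
          rw [Real.mul_rpow (Real.rpow_nonneg hC0.le _) (Real.rpow_nonneg (hpos n).le _),
            ← Real.rpow_mul hC0.le, ← Real.rpow_mul (hpos n).le]
          congr 2 <;> field_simp
          rw [Real.rpow_one]
      _ ≤ C ^ (k + n) * m n := by
          apply mul_le_mul_of_nonneg_right _ (hpos n).le
          calc C ^ ((k:ℝ) - (n:ℝ)) ≤ C ^ (((k+n : ℕ)):ℝ) := by
                apply Real.rpow_le_rpow_of_exponent_le hC
                push_cast; linarith
            _ = C ^ (k+n) := Real.rpow_natCast C (k+n)
end

section
/- Let m : ℕ → ℝ be a sequence of positive reals with m_n^{1/n} ≤ m_{n+1}^{1/(n+1)} for all n ≥ 1, suppose there exists C ≥ 1 with m_{n+1} ≤ C·m_n^{1+1/n} for all n ≥ 1, and suppose in addition that the sequence v_k = m_k^{1/k} is slowly varying in the sense that v_{2k}/v_k → 1 as k → ∞. Then for every η > 1 there exists C_η > 0 such that m_k^{n/k} ≤ C_η·η^{k+n}·m_n for all integers n, k ≥ 1. -/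
/-- (Remark following the claim on regular `m`.)
If in addition `v k = m k^{1/k}` is slowly varying (`v (2k) / v k → 1`), then for every
`η > 1` there is `C_η > 0` with `m k^{n/k} ≤ C_η · η^{k+n} · m n` for all `n, k ≥ 1`. -/
theorem stmt_9
    (m : ℕ → ℝ) (hpos : ∀ n, 0 < m n)
    (hmono : ∀ n : ℕ, 1 ≤ n →
      m n ^ ((1 : ℝ) / (n : ℝ)) ≤ m (n + 1) ^ ((1 : ℝ) / ((n : ℝ) + 1)))
    (C : ℝ) (hC : 1 ≤ C)
    (hrat : ∀ n : ℕ, 1 ≤ n → m (n + 1) ≤ C * m n ^ ((1 : ℝ) + 1 / (n : ℝ)))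
    (hsv : Filter.Tendsto
      (fun k : ℕ => m (2 * k) ^ ((1 : ℝ) / (2 * (k : ℝ))) / m k ^ ((1 : ℝ) / (k : ℝ)))
      Filter.atTop (nhds 1)) :
    ∀ η : ℝ, 1 < η → ∃ Cη : ℝ, 0 < Cη ∧ ∀ n k : ℕ, 1 ≤ n → 1 ≤ k →
      m k ^ ((n : ℝ) / (k : ℝ)) ≤ Cη * η ^ (k + n) * m n := by
  intro η hη
  set v : ℕ → ℝ := fun k => m k ^ ((1:ℝ)/(k:ℝ)) with hv
  have vpos : ∀ k, 0 < v k := fun k => Real.rpow_pos_of_pos (hpos k) _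
  have vmono : ∀ a b : ℕ, 1 ≤ a → a ≤ b → v a ≤ v b := by
    intro a b ha hab
    induction b, hab using Nat.le_induction with
    | base => exact le_refl _
    | succ n hn ih =>
      refine le_trans ih ?_
      have h := hmono n (le_trans ha hn)
      simp only [hv]
      push_cast
      exact h
  have vpow : ∀ n k : ℕ, m k ^ ((n:ℝ)/(k:ℝ)) = v k ^ n := by
    intro n k
    rw [hv]
    rw [← Real.rpow_natCast (m k ^ ((1:ℝ)/(k:ℝ))) n, ← Real.rpow_mul (hpos k).le]
    congr 1
    ring
  have vself : ∀ n : ℕ, 1 ≤ n → v n ^ n = m n := by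
    intro n hn
    rw [← vpow n n, div_self (Nat.cast_ne_zero.mpr (by omega)), Real.rpow_one]
  -- slow variation gives doubling bound
  have hev : ∀ᶠ j in Filter.atTop,
      m (2 * j) ^ ((1 : ℝ) / (2 * (j : ℝ))) / m j ^ ((1 : ℝ) / (j : ℝ)) < η :=
    hsv.eventually_lt_const hη
  obtain ⟨K, hK⟩ := Filter.eventually_atTop.mp hev
  set K' : ℕ := max K 1 with hK'def
  have hK'1 : 1 ≤ K' := le_max_right _ _
  have hdoub1 : ∀ j : ℕ, K' ≤ j → v (2 * j) ≤ η * v j := by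
    intro j hj
    have h1 := hK j (le_trans (le_max_left _ _) hj)
    have h2 : v (2 * j) / v j < η := by
      simp only [hv]
      push_cast
      exact h1
    exact le_of_lt ((div_lt_iff₀ (vpos j)).mp h2)
  have hdoub : ∀ t n : ℕ, K' ≤ n → v (2 ^ t * n) ≤ η ^ t * v n := by
    intro t
    induction t with
    | zero => intro n hn; simp
    | succ t ih =>
      intro n hn
      have harg : 2 ^ (t+1) * n = 2 * (2 ^ t * n) := by ring
      have hge : K' ≤ 2 ^ t * n :=
        le_trans hn (Nat.le_mul_of_pos_left n (Nat.pow_pos (n := t) (by norm_num)))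
      calc v (2 ^ (t+1) * n) = v (2 * (2 ^ t * n)) := by rw [harg]
        _ ≤ η * v (2 ^ t * n) := hdoub1 _ hge
        _ ≤ η * (η ^ t * v n) :=
            mul_le_mul_of_nonneg_left (ih n hn) (le_of_lt (lt_trans one_pos hη))
        _ = η ^ (t+1) * v n := by ring
  -- main estimate for n ≥ K'
  have hmain : ∀ n k : ℕ, K' ≤ n → 1 ≤ k → v k ^ n ≤ η ^ (k + n) * m n := by
    intro n k hn hk
    have hn1 : 1 ≤ n := le_trans hK'1 hn
    have hone : (1:ℝ) ≤ η ^ (k + n) := one_le_pow₀ hη.le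
    by_cases hkn : k ≤ n
    · have h1 : v k ^ n ≤ v n ^ n := pow_le_pow_left₀ (vpos k).le (vmono k n hk hkn) n
      rw [vself n hn1] at h1
      calc v k ^ n ≤ m n := h1
        _ = 1 * m n := (one_mul _).symm
        _ ≤ η ^ (k + n) * m n := by
            exact mul_le_mul_of_nonneg_right hone (hpos n).le
    · push_neg at hkn
      set t : ℕ := Nat.log 2 (k / n) with ht
      have hq1 : 1 ≤ k / n := (Nat.one_le_div_iff (by omega)).mpr hkn.le
      have hlow : 2 ^ t ≤ k / n := Nat.pow_log_le_self 2 (by omega)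
      have hlow' : 2 ^ t * n ≤ k := by
        calc 2 ^ t * n ≤ (k / n) * n := Nat.mul_le_mul_right n hlow
          _ ≤ k := Nat.div_mul_le_self k n
      have hhigh : k / n < 2 ^ (t + 1) := Nat.lt_pow_succ_log_self (by norm_num) _
      have hhigh' : k ≤ 2 ^ (t + 1) * n := by
        have h1 := Nat.div_add_mod k n
        have h2 : k % n < n := Nat.mod_lt k (by omega)
        nlinarith [Nat.div_add_mod k n]
      have hvk : v k ≤ η ^ (t + 1) * v n := by
        calc v k ≤ v (2 ^ (t+1) * n) := vmono k _ hk hhigh'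
          _ ≤ η ^ (t+1) * v n := hdoub (t+1) n hn
      have hpow : v k ^ n ≤ (η ^ (t+1) * v n) ^ n := pow_le_pow_left₀ (vpos k).le hvk n
      have hexp : (t + 1) * n ≤ k + n := by
        have h1 : t < 2 ^ t := Nat.lt_two_pow_self
        have h2 : t * n ≤ 2 ^ t * n := Nat.mul_le_mul_right n h1.le
        nlinarith
      calc v k ^ n ≤ (η ^ (t+1) * v n) ^ n := hpow
        _ = η ^ ((t+1) * n) * m n := by rw [mul_pow, ← pow_mul, vself n hn1]
        _ ≤ η ^ (k + n) * m n :=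
            mul_le_mul_of_nonneg_right (pow_le_pow_right₀ hη.le hexp) (hpos n).le
  -- the constant
  set Cη : ℝ := 1 + ∑ j ∈ Finset.range K', (η ^ K' * m K' / m j + 1 / m j) with hCη
  have hterm : ∀ j ∈ Finset.range K', (0:ℝ) ≤ η ^ K' * m K' / m j + 1 / m j := by
    intro j _
    have := hpos j
    have := hpos K'
    positivity
  have hCpos : 0 < Cη := by
    have := Finset.sum_nonneg hterm
    rw [hCη]; linarith
  have hC1 : (1:ℝ) ≤ Cη := by
    have := Finset.sum_nonneg hterm
    rw [hCη]; linarith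
  have hCn : ∀ n : ℕ, n < K' → η ^ K' * m K' / m n + 1 / m n ≤ Cη := by
    intro n hn
    have h := Finset.single_le_sum hterm (Finset.mem_range.mpr hn)
    rw [hCη]; linarith
  refine ⟨Cη, hCpos, ?_⟩
  intro n k hn hk
  rw [vpow]
  have hone : (1:ℝ) ≤ η ^ (k + n) := one_le_pow₀ hη.le
  by_cases hnK : K' ≤ n
  · calc v k ^ n ≤ η ^ (k + n) * m n := hmain n k hnK hk
      _ = 1 * (η ^ (k + n) * m n) := (one_mul _).symm
      _ ≤ Cη * (η ^ (k + n) * m n) := by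
          refine mul_le_mul_of_nonneg_right hC1 ?_
          have := hpos n
          positivity
      _ = Cη * η ^ (k + n) * m n := by ring
  · push_neg at hnK
    have hsum := hCn n hnK
    have hmn := hpos n
    have hterm1 : η ^ K' * m K' / m n ≤ Cη := by
      have : (0:ℝ) ≤ 1 / m n := by positivity
      linarith
    have hterm2 : 1 / m n ≤ Cη := by
      have h1 : (0:ℝ) ≤ η ^ K' * m K' / m n := by
        have := hpos K'
        positivity
      linarith
    by_cases hvk : v k ≤ 1
    · have h1 : v k ^ n ≤ 1 := pow_le_one₀ (vpos k).le hvk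
      calc v k ^ n ≤ 1 := h1
        _ = (1 / m n) * 1 * m n := by field_simp
        _ ≤ Cη * η ^ (k + n) * m n := by
            refine mul_le_mul_of_nonneg_right ?_ hmn.le
            exact mul_le_mul hterm2 hone (by norm_num) hCpos.le
    · push_neg at hvk
      have h1 : v k ^ n ≤ v k ^ K' := pow_le_pow_right₀ hvk.le hnK.le
      have h2 : v k ^ K' ≤ η ^ (k + K') * m K' := hmain K' k (le_refl _) hk
      have hkK : η ^ (k + K') * m K' = (η ^ K' * m K' / m n) * η ^ k * m n := by
        field_simp
        ring
      have h3 : (η ^ K' * m K' / m n) * η ^ k * m n ≤ Cη * η ^ (k + n) * m n := by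
        refine mul_le_mul_of_nonneg_right ?_ hmn.le
        have hηk : (0:ℝ) < η ^ k := pow_pos (lt_trans one_pos hη) k
        have hstep : η ^ k ≤ η ^ (k + n) := pow_le_pow_right₀ hη.le (Nat.le_add_right _ _)
        calc (η ^ K' * m K' / m n) * η ^ k ≤ Cη * η ^ k :=
              mul_le_mul_of_nonneg_right hterm1 hηk.le
          _ ≤ Cη * η ^ (k + n) := mul_le_mul_of_nonneg_left hstep hCpos.le
      calc v k ^ n ≤ v k ^ K' := h1
        _ ≤ η ^ (k + K') * m K' := h2
        _ = (η ^ K' * m K' / m n) * η ^ k * m n := hkK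
        _ ≤ Cη * η ^ (k + n) * m n := h3
end

section
/- Let C₁ > 1, let η > 1, and let L̂ : ℕ → ℝ be a sequence of positive reals which is eventually non-decreasing and satisfies L̂(⌊C₁·k⌋ + 1)/L̂(k) → 1 as k → ∞. Then there exists k₀ ∈ ℕ such that for all integers k, n with k₀ ≤ k ≤ n ≤ C₁·k one has η^{−n} ≤ (L̂(n)/(η·L̂(k)))ⁿ ≤ η^{−n/2}. -/
/-- (First assertion of the claim used for almost holomorphic extensions.)
If `L̂` is positive, eventually non-decreasing, with `L̂(⌊C₁k⌋+1)/L̂(k) → 1`, then there is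
`k₀` so that `η^{−n} ≤ (L̂(n)/(η·L̂(k)))ⁿ ≤ η^{−n/2}` whenever `k₀ ≤ k ≤ n ≤ C₁·k`. -/
theorem stmt_10
    (C₁ η : ℝ) (hC₁ : 1 < C₁) (hη : 1 < η)
    (Lhat : ℕ → ℝ) (hpos : ∀ k, 0 < Lhat k)
    (hmono : ∃ n₀ : ℕ, ∀ n : ℕ, n₀ ≤ n → Lhat n ≤ Lhat (n + 1))
    (hsv : Filter.Tendsto (fun k : ℕ => Lhat (Nat.floor (C₁ * (k : ℝ)) + 1) / Lhat k)
      Filter.atTop (nhds 1)) :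
    ∃ k₀ : ℕ, ∀ k n : ℕ, k₀ ≤ k → k ≤ n → (n : ℝ) ≤ C₁ * (k : ℝ) →
      η ^ (-(n : ℝ)) ≤ (Lhat n / (η * Lhat k)) ^ n ∧
      (Lhat n / (η * Lhat k)) ^ n ≤ η ^ (-(n : ℝ) / 2) := by
  have hη0 : (0:ℝ) < η := by linarith
  set s := Real.sqrt η with hs
  have hs0 : 0 < s := Real.sqrt_pos.mpr hη0
  have hs1 : 1 < s := by
    have := Real.sqrt_lt_sqrt (by norm_num) hη
    simpa using this
  have hss : s * s = η := Real.mul_self_sqrt hη0.le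
  obtain ⟨n₀, hmono⟩ := hmono
  have hmono' : ∀ m₁ m₂ : ℕ, n₀ ≤ m₁ → m₁ ≤ m₂ → Lhat m₁ ≤ Lhat m₂ := by
    intro m₁ m₂ h1 h12
    induction m₂ with
    | zero => simp [Nat.le_zero.mp h12]
    | succ m ih =>
      rcases Nat.lt_or_ge m₁ (m+1) with h | h
      · exact (ih (by omega)).trans (hmono m (by omega))
      · have : m₁ = m + 1 := by omega
        simp [this]
  have hev : ∀ᶠ k : ℕ in Filter.atTop,
      Lhat (Nat.floor (C₁ * (k : ℝ)) + 1) / Lhat k < s :=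
    hsv.eventually (eventually_lt_nhds hs1)
  obtain ⟨N, hN⟩ := Filter.eventually_atTop.mp hev
  refine ⟨max N n₀, fun k n hk hkn hnC => ?_⟩
  have hkpos := hpos k
  have hnpos := hpos n
  have hkn₀ : n₀ ≤ k := le_trans (le_max_right _ _) hk
  have hnM : n ≤ Nat.floor (C₁ * (k : ℝ)) + 1 := (Nat.le_floor hnC).trans (by omega)
  have hL1 : Lhat k ≤ Lhat n := hmono' k n hkn₀ hkn
  have hL2 : Lhat n ≤ Lhat (Nat.floor (C₁ * (k : ℝ)) + 1) :=
    hmono' n _ (hkn₀.trans hkn) hnM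
  have hL3 : Lhat (Nat.floor (C₁ * (k : ℝ)) + 1) / Lhat k < s :=
    hN k (le_trans (le_max_left _ _) hk)
  have hL4 : Lhat n ≤ s * Lhat k :=
    hL2.trans ((div_lt_iff₀ hkpos).mp hL3).le
  have hr0 : 0 < Lhat n / (η * Lhat k) := by positivity
  constructor
  · have hlow : η⁻¹ ≤ Lhat n / (η * Lhat k) := by
      rw [le_div_iff₀ (by positivity)]
      calc η⁻¹ * (η * Lhat k) = Lhat k := by field_simp
      _ ≤ Lhat n := hL1
    calc η ^ (-(n : ℝ)) = (η⁻¹) ^ n := by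
          rw [Real.rpow_neg hη0.le, Real.rpow_natCast, inv_pow]
    _ ≤ (Lhat n / (η * Lhat k)) ^ n :=
        pow_le_pow_left₀ (by positivity) hlow n
  · have hup : Lhat n / (η * Lhat k) ≤ s⁻¹ := by
      rw [div_le_iff₀ (by positivity)]
      calc Lhat n ≤ s * Lhat k := hL4
      _ = s⁻¹ * (η * Lhat k) := by
          rw [← hss]; field_simp
    calc (Lhat n / (η * Lhat k)) ^ n ≤ (s⁻¹) ^ n :=
          pow_le_pow_left₀ hr0.le hup n
    _ = η ^ (-(n : ℝ) / 2) := by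
        rw [show -(n:ℝ)/2 = (1/2) * (-(n:ℝ)) by ring, Real.rpow_mul hη0.le,
          ← Real.sqrt_eq_rpow, ← hs, Real.rpow_neg hs0.le, Real.rpow_natCast, inv_pow]
end

section
/- Let m : ℕ → ℝ be a sequence of positive reals with m_n^{1/n} ≤ m_{n+1}^{1/(n+1)} for all n ≥ 1, and suppose there exists C ≥ 1 with m_{n+1} ≤ C·m_n^{1+1/n} for all n ≥ 1. Then for every C₁ > 1 there exists C₃ > 0 such that for all integers k ≥ 1 and all integers n with k ≤ n ≤ C₁·k one has 1 ≤ m_n·m_k^{−n/k} ≤ C₃ⁿ. -/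
/-- (Second assertion of the second claim on regular `m`.)
For a positive sequence `m` with `(m n)^{1/n}` non-decreasing and
`m (n+1) ≤ C · (m n)^{1+1/n}`: for every `C₁ > 1` there is `C₃ > 0` such that
`1 ≤ m n · m k^{−n/k} ≤ C₃ⁿ` whenever `1 ≤ k ≤ n ≤ C₁·k`. -/
theorem stmt_11
    (m : ℕ → ℝ) (hpos : ∀ n, 0 < m n)
    (hmono : ∀ n : ℕ, 1 ≤ n →
      m n ^ ((1 : ℝ) / (n : ℝ)) ≤ m (n + 1) ^ ((1 : ℝ) / ((n : ℝ) + 1)))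
    (C : ℝ) (hC : 1 ≤ C)
    (hrat : ∀ n : ℕ, 1 ≤ n → m (n + 1) ≤ C * m n ^ ((1 : ℝ) + 1 / (n : ℝ))) :
    ∀ C₁ : ℝ, 1 < C₁ → ∃ C₃ : ℝ, 0 < C₃ ∧
      ∀ k n : ℕ, 1 ≤ k → k ≤ n → (n : ℝ) ≤ C₁ * (k : ℝ) →
        1 ≤ m n * m k ^ (-((n : ℝ) / (k : ℝ))) ∧
        m n * m k ^ (-((n : ℝ) / (k : ℝ))) ≤ C₃ ^ n := by
  intro C₁ hC₁
  have hC0 : (0:ℝ) < C := zero_lt_one.trans_le hC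
  refine ⟨C ^ (C₁ - 1), Real.rpow_pos_of_pos hC0 _, ?_⟩
  intro k n hk hkn hnC
  have hk0 : (0:ℝ) < (k:ℝ) := by exact_mod_cast hk
  have hn0 : (0:ℝ) < (n:ℝ) := hk0.trans_le (by exact_mod_cast hkn)
  set a : ℕ → ℝ := fun j => m j ^ ((1:ℝ)/(j:ℝ)) with ha
  have hapos : ∀ j, 0 < a j := fun j => Real.rpow_pos_of_pos (hpos j) _
  -- one step of the ratio estimate
  have hstep : ∀ j, k ≤ j → a (j+1) ≤ C ^ ((1:ℝ)/(k:ℝ)) * a j := by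
    intro j hj
    have hj1 : 1 ≤ j := hk.trans hj
    have hj0 : (0:ℝ) < (j:ℝ) := by exact_mod_cast hj1
    have h1 : a (j+1) ≤ (C * m j ^ ((1:ℝ) + 1/(j:ℝ))) ^ ((1:ℝ)/((j:ℝ)+1)) := by
      have hcast : (((j+1 : ℕ)):ℝ) = (j:ℝ)+1 := by push_cast; ring
      simp only [ha, hcast]
      exact Real.rpow_le_rpow (hpos _).le (hrat j hj1) (by positivity)
    have h2 : (C * m j ^ ((1:ℝ) + 1/(j:ℝ))) ^ ((1:ℝ)/((j:ℝ)+1))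
        = C ^ ((1:ℝ)/((j:ℝ)+1)) * a j := by
      have he : ((1:ℝ) + 1/(j:ℝ)) * ((1:ℝ)/((j:ℝ)+1)) = 1/(j:ℝ) := by
        field_simp
      rw [Real.mul_rpow hC0.le (Real.rpow_pos_of_pos (hpos j) _).le,
        ← Real.rpow_mul (hpos j).le, he]
    have h3 : C ^ ((1:ℝ)/((j:ℝ)+1)) ≤ C ^ ((1:ℝ)/(k:ℝ)) := by
      apply Real.rpow_le_rpow_of_exponent_le hC
      apply one_div_le_one_div_of_le hk0
      have : (k:ℝ) ≤ (j:ℝ) := by exact_mod_cast hj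
      linarith
    calc a (j+1) ≤ C ^ ((1:ℝ)/((j:ℝ)+1)) * a j := h1.trans_eq h2
      _ ≤ C ^ ((1:ℝ)/(k:ℝ)) * a j :=
          mul_le_mul_of_nonneg_right h3 (hapos j).le
  -- chained estimates
  have hchain : ∀ N, k ≤ N → a k ≤ a N ∧ a N ≤ C ^ (((N:ℝ)-(k:ℝ))/(k:ℝ)) * a k := by
    intro N hN
    induction N, hN using Nat.le_induction with
    | base =>
      refine ⟨le_refl _, ?_⟩
      simp
    | succ j hj ih =>
      have hj1 : 1 ≤ j := hk.trans hj
      constructor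
      · refine ih.1.trans ?_
        have := hmono j hj1
        have hcast : (((j+1 : ℕ)):ℝ) = (j:ℝ)+1 := by push_cast; ring
        simpa only [ha, hcast] using this
      · refine (hstep j hj).trans ?_
        calc C ^ ((1:ℝ)/(k:ℝ)) * a j
            ≤ C ^ ((1:ℝ)/(k:ℝ)) * (C ^ (((j:ℝ)-(k:ℝ))/(k:ℝ)) * a k) := by
              apply mul_le_mul_of_nonneg_left ih.2 (Real.rpow_pos_of_pos hC0 _).le
          _ = C ^ (((((j:ℕ)+1 : ℕ):ℝ)-(k:ℝ))/(k:ℝ)) * a k := by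
              rw [← mul_assoc, ← Real.rpow_add hC0]
              congr 2
              push_cast
              field_simp
              ring
  -- rewrite the main expression
  have han : a n ^ ((n:ℝ)) = m n := by
    simp only [ha]
    rw [← Real.rpow_mul (hpos n).le, one_div_mul_cancel hn0.ne', Real.rpow_one]
  have hak : a k ^ (-(n:ℝ)) = m k ^ (-((n:ℝ)/(k:ℝ))) := by
    simp only [ha]
    rw [← Real.rpow_mul (hpos k).le]
    congr 1
    field_simp
  have hexpr : m n * m k ^ (-((n:ℝ)/(k:ℝ))) = (a n / a k) ^ ((n:ℝ)) := by
    rw [Real.div_rpow (hapos n).le (hapos k).le, han, ← hak,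
        Real.rpow_neg (hapos k).le, div_eq_mul_inv]
  constructor
  · rw [hexpr]
    calc (1:ℝ) = 1 ^ ((n:ℝ)) := (Real.one_rpow _).symm
      _ ≤ (a n / a k) ^ ((n:ℝ)) := by
          apply Real.rpow_le_rpow zero_le_one _ hn0.le
          exact (one_le_div (hapos k)).2 (hchain n hkn).1
  · rw [hexpr]
    have hdiv : a n / a k ≤ C ^ (((n:ℝ)-(k:ℝ))/(k:ℝ)) :=
      (div_le_iff₀ (hapos k)).2 (hchain n hkn).2
    have hEe : ((n:ℝ)-(k:ℝ))/(k:ℝ) ≤ C₁ - 1 := by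
      rw [div_le_iff₀ hk0]
      have : (C₁ - 1) * (k:ℝ) = C₁ * (k:ℝ) - (k:ℝ) := by ring
      linarith
    calc (a n / a k) ^ ((n:ℝ))
        ≤ (C ^ (((n:ℝ)-(k:ℝ))/(k:ℝ))) ^ ((n:ℝ)) :=
          Real.rpow_le_rpow (div_nonneg (hapos n).le (hapos k).le) hdiv hn0.le
      _ = C ^ ((((n:ℝ)-(k:ℝ))/(k:ℝ)) * (n:ℝ)) := (Real.rpow_mul hC0.le _ _).symm
      _ ≤ C ^ ((C₁ - 1) * (n:ℝ)) := by
          apply Real.rpow_le_rpow_of_exponent_le hC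
          exact mul_le_mul_of_nonneg_right hEe hn0.le
      _ = (C ^ (C₁ - 1)) ^ n := by
          rw [← Real.rpow_natCast (C ^ (C₁ - 1)) n, ← Real.rpow_mul hC0.le]
end

section
/- Let p be a nonzero polynomial with complex coefficients such that p(x) ≠ 0 for every real x ≥ 0. Then there exists C > 0 such that for every n ∈ ℕ and every real x ≥ 0, the n-th complex derivative of z ↦ 1/p(z) satisfies |(1/p)⁽ⁿ⁾(x)| ≤ C^{n+1}·n!. -/
open Polynomial Metric Set Filter

/-- If `p` is a nonzero complex polynomial without zeros on `[0,∞)`, then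
`|(1/p)⁽ⁿ⁾(x)| ≤ C^{n+1}·n!` for some `C > 0`, uniformly over `n ∈ ℕ` and real `x ≥ 0`. -/
theorem stmt_13
    (p : Polynomial ℂ) (hp : p ≠ 0)
    (hroot : ∀ x : ℝ, 0 ≤ x → Polynomial.eval (x : ℂ) p ≠ 0) :
    ∃ C : ℝ, 0 < C ∧ ∀ n : ℕ, ∀ x : ℝ, 0 ≤ x →
      ‖iteratedDeriv n (fun z : ℂ => (Polynomial.eval z p)⁻¹) (x : ℂ)‖ ≤
        C ^ (n + 1) * (n.factorial : ℝ) := by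
  classical
  set L : Set ℂ := Complex.ofReal '' Set.Ici 0 with hL
  have hLclosed : IsClosed L :=
    (Complex.isometry_ofReal.isClosedEmbedding.isClosedMap) _ isClosed_Ici
  have hL0 : (0 : ℂ) ∈ L := ⟨0, Set.self_mem_Ici, by simp⟩
  have hLne : L.Nonempty := ⟨0, hL0⟩
  -- distance from roots to L
  have hrootL : ∀ ζ ∈ p.roots, 0 < Metric.infDist ζ L := by
    intro ζ hζ
    rw [← hLclosed.notMem_iff_infDist_pos hLne]
    rintro ⟨x, hx, rfl⟩
    exact hroot x hx (Polynomial.isRoot_of_mem_roots hζ)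
  obtain ⟨r, hr0, hrF⟩ : ∃ r > 0, ∀ ζ ∈ p.roots, 2 * r ≤ Metric.infDist ζ L := by
    by_cases hF : p.roots.toFinset.Nonempty
    · obtain ⟨ζ₀, hζ₀, hmin⟩ :=
        p.roots.toFinset.exists_min_image (fun ζ => Metric.infDist ζ L) hF
      have h0 := hrootL ζ₀ (Multiset.mem_toFinset.mp hζ₀)
      refine ⟨Metric.infDist ζ₀ L / 2, by linarith, fun ζ hζ => ?_⟩
      have := hmin ζ (Multiset.mem_toFinset.mpr hζ)
      linarith
    · refine ⟨1, one_pos, fun ζ hζ => absurd (Multiset.mem_toFinset.mpr hζ) ?_⟩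
      simp [Finset.not_nonempty_iff_eq_empty.mp hF]
  have hr0' := hrootL
  set S : Set ℂ := {z : ℂ | Metric.infDist z L ≤ r} with hS
  have hSclosed : IsClosed S := isClosed_le (continuous_infDist_pt L) continuous_const
  have hSeval : ∀ z ∈ S, Polynomial.eval z p ≠ 0 := by
    intro z hz h0
    have hzr : z ∈ p.roots := Polynomial.mem_roots'.mpr ⟨hp, h0⟩
    have := hrF z hzr
    have : (2 : ℝ) * r ≤ r := this.trans hz
    linarith
  -- lower bound for ‖eval z p‖ on S
  obtain ⟨ε, hε0, hεS⟩ : ∃ ε > 0, ∀ z ∈ S, ε ≤ ‖Polynomial.eval z p‖ := by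
    by_cases hdeg : 0 < p.degree
    · have htop : Tendsto (fun z : ℂ => ‖Polynomial.eval z p‖) (cocompact ℂ) atTop :=
        p.tendsto_norm_atTop hdeg tendsto_norm_cocompact_atTop
      obtain ⟨t, htc, hts⟩ := mem_cocompact.mp (htop.eventually_ge_atTop 1)
      obtain ⟨R, hR⟩ := htc.isBounded.subset_closedBall 0
      set K : Set ℂ := S ∩ closedBall 0 (max R 0) with hK
      have hKc : IsCompact K := (isCompact_closedBall 0 _).inter_left hSclosed
      have h0S : (0 : ℂ) ∈ S := by
        have : Metric.infDist (0 : ℂ) L ≤ dist (0 : ℂ) 0 := Metric.infDist_le_dist_of_mem hL0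
        simpa [hS] using this.trans (by simp [hr0.le])
      have hKne : K.Nonempty := ⟨0, h0S, mem_closedBall_self (le_max_right R 0)⟩
      obtain ⟨z₀, hz₀K, hmin⟩ := hKc.exists_isMinOn hKne
        ((p.continuous.norm.continuousOn).mono (Set.subset_univ K) :
          ContinuousOn (fun z : ℂ => ‖Polynomial.eval z p‖) K)
      refine ⟨min ‖Polynomial.eval z₀ p‖ 1, lt_min (by
        simpa [norm_pos_iff] using hSeval z₀ hz₀K.1) one_pos, fun z hz => ?_⟩
      by_cases hzb : z ∈ closedBall (0 : ℂ) (max R 0)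
      · exact (min_le_left _ _).trans (hmin ⟨hz, hzb⟩)
      · have hzt : z ∉ t := fun h => hzb (closedBall_subset_closedBall (le_max_left R 0) (hR h))
        exact (min_le_right _ _).trans (hts hzt)
    · have hpc : p = Polynomial.C (p.coeff 0) := p.eq_C_of_degree_le_zero (not_lt.mp hdeg)
      refine ⟨‖p.coeff 0‖, ?_, fun z _ => ?_⟩
      · simp only [norm_pos_iff]
        intro h; exact hp (by rw [hpc, h, map_zero])
      · rw [hpc]; simp
  -- the main estimate
  set f : ℂ → ℂ := fun z => (Polynomial.eval z p)⁻¹ with hf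
  refine ⟨max ε⁻¹ r⁻¹, lt_max_of_lt_left (by positivity), fun n x hx => ?_⟩
  set C : ℝ := max ε⁻¹ r⁻¹ with hC
  have hC0 : 0 < C := lt_max_of_lt_left (by positivity)
  have hxL : (x : ℂ) ∈ L := ⟨x, hx, rfl⟩
  have hball : closedBall (x : ℂ) r ⊆ S := by
    intro z hz
    exact (Metric.infDist_le_dist_of_mem hxL).trans (mem_closedBall.mp hz)
  lift r to NNReal using hr0.le with r' hr'
  have hr0'' : (0 : NNReal) < r' := by exact_mod_cast hr0
  have hd : DifferentiableOn ℂ f (closedBall (x : ℂ) r') := fun z hz =>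
    ((p.differentiableAt).inv (hSeval z (hball hz))).differentiableWithinAt
  have hps := hd.hasFPowerSeriesOnBall hr0''
  -- norm of coefficients
  have hfc : ContinuousOn f S := ContinuousOn.inv₀ p.continuous.continuousOn hSeval
  have hmaps : ∀ θ : ℝ, circleMap (x : ℂ) r' θ ∈ S := fun θ =>
    hball (circleMap_mem_closedBall _ hr0.le θ)
  have hcont : Continuous fun θ : ℝ => ‖f (circleMap (x : ℂ) r' θ)‖ :=
    (hfc.comp_continuous (continuous_circleMap _ _) hmaps).norm
  have hint : (2 * Real.pi)⁻¹ * ∫ θ : ℝ in (0)..2 * Real.pi, ‖f (circleMap (x : ℂ) r' θ)‖ ≤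
      ε⁻¹ := by
    have h1 : ∫ θ : ℝ in (0)..2 * Real.pi, ‖f (circleMap (x : ℂ) r' θ)‖ ≤
        ∫ _ : ℝ in (0)..2 * Real.pi, ε⁻¹ := by
      refine intervalIntegral.integral_mono_on Real.two_pi_pos.le (hcont.intervalIntegrable 0 (2 * Real.pi))
        intervalIntegrable_const fun θ _ => ?_
      show ‖(Polynomial.eval (circleMap (x : ℂ) r' θ) p)⁻¹‖ ≤ ε⁻¹
      rw [norm_inv]
      exact inv_anti₀ hε0 (hεS _ (hmaps θ))
    have h2 : ∫ _ : ℝ in (0)..2 * Real.pi, ε⁻¹ = 2 * Real.pi * ε⁻¹ := by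
      simp [mul_comm]
    rw [h2] at h1
    calc (2 * Real.pi)⁻¹ * ∫ θ : ℝ in (0)..2 * Real.pi, ‖f (circleMap (x : ℂ) r' θ)‖
        ≤ (2 * Real.pi)⁻¹ * (2 * Real.pi * ε⁻¹) := by
          exact mul_le_mul_of_nonneg_left h1 (by positivity)
      _ = ε⁻¹ := by field_simp
  have hcoef : ‖cauchyPowerSeries f (x : ℂ) r' n‖ ≤ ε⁻¹ * ((r' : ℝ)⁻¹) ^ n := by
    refine (norm_cauchyPowerSeries_le f (x : ℂ) r' n).trans ?_
    rw [abs_of_nonneg (r'.coe_nonneg)]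
    exact mul_le_mul_of_nonneg_right hint (by positivity)
  have h1 : iteratedDeriv n f (x : ℂ) = iteratedFDeriv ℂ n f (x : ℂ) fun _ => 1 :=
    iteratedDeriv_eq_iteratedFDeriv
  have h2 := hps.factorial_smul (y := (1 : ℂ)) n
  have h3 : ‖iteratedDeriv n f (x : ℂ)‖
      = (n.factorial : ℝ) * ‖cauchyPowerSeries f (x : ℂ) r' n fun _ => 1‖ := by
    rw [h1, ← h2, nsmul_eq_mul, norm_mul]
    simp
  have h4 : ‖cauchyPowerSeries f (x : ℂ) r' n fun _ => 1‖ ≤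
      ‖cauchyPowerSeries f (x : ℂ) r' n‖ := by
    refine ((cauchyPowerSeries f (x : ℂ) r' n).le_opNorm _).trans ?_
    simp
  have hεC : ε⁻¹ ≤ C := by rw [hC]; exact le_max_left _ _
  have hrC : (r' : ℝ)⁻¹ ≤ C := by rw [hC]; exact le_max_right _ _
  calc ‖iteratedDeriv n f (x : ℂ)‖
      = (n.factorial : ℝ) * ‖cauchyPowerSeries f (x : ℂ) r' n fun _ => 1‖ := h3
    _ ≤ (n.factorial : ℝ) * (ε⁻¹ * ((r' : ℝ)⁻¹) ^ n) := by
        exact mul_le_mul_of_nonneg_left (h4.trans hcoef) (by positivity)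
    _ ≤ (n.factorial : ℝ) * (C * C ^ n) := by
        refine mul_le_mul_of_nonneg_left ?_ (by positivity)
        exact mul_le_mul hεC (pow_le_pow_left₀ (by positivity) hrC n) (by positivity) hC0.le
    _ = C ^ (n + 1) * (n.factorial : ℝ) := by ring
end
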